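/- arXiv:2403.00583 — 10 statements merged into one kernel-verified Lean document; each statement's English description precedes it below -/
import Mathlib

section
/- (Frobenius) If n is a positive divisor of the order of a finite group G, then the number of elements x ∈ G satisfying x^n = 1 is a multiple of n. -/
/-!
Fix a prime `p` and write `n = p ^ a * m` with `p ∤ m`; it suffices to show that `p ^ a` divides
the number of solutions of `x ^ n = 1`. Each solution splits uniquely as `x = u * w` with `u, w`
commuting powers of `x`, `u ^ (p ^ a) = 1` and `w ^ m = 1`, so the count is the sum over `w` with
`w ^ m = 1` of the number of `u ∈ C(w)` with `u ^ (p ^ a) = 1`. Summing over a conjugacy class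
multiplies such a term by `|G : C(w)|`, so it is enough that `gcd (p ^ a, |C(w)|)` divides the
count in `C(w)`: the theorem reduces to prime powers `p ^ b ∣ |H|` for subgroups `H`.

For prime powers we induct on `|G|`. Taking `p ^ a` to be the full `p`-part of `|G|` and `m` its
complement, the count is `|G|` itself, the central `w` contribute equal terms and the others
contribute multiples of `p ^ a` by induction; the number of central `w` with `w ^ m = 1` is
prime to `p` by Cauchy, which gives the case `b = a`. Smaller `b` follow because the elements of
order `p ^ j` come in blocks of `φ (p ^ j)` generators of one cyclic subgroup.
-/

open Finset MulAction Subgroup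

lemma pow_eq_one_of_dvd {M : Type*} [Monoid M] {x : M} {q k : ℕ} (hx : x ^ q = 1) (h : q ∣ k) :
    x ^ k = 1 := by
  obtain ⟨c, rfl⟩ := h
  rw [pow_mul, hx, one_pow]

lemma dvd_index_mul_of_gcd_card_dvd {G : Type*} [Group G] (H : Subgroup G) {s k : ℕ}
    (hs : s ∣ Nat.card G) (hk : s.gcd (Nat.card H) ∣ k) : s ∣ H.index * k := by
  rw [← card_mul_index, mul_comm] at hs
  have : s ∣ H.index * s.gcd (Nat.card H) := by
    rw [← Nat.gcd_mul_left]
    exact Nat.dvd_gcd (dvd_mul_left s _) hs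
  exact this.trans (mul_dvd_mul_left _ hk)

lemma dvd_sum_of_dvd_index_stabilizer_mul {M α : Type*} [Group M] [MulAction M α] {T : Finset α}
    (hT : ∀ m : M, ∀ x ∈ T, m • x ∈ T) {f : α → ℕ} (hf : ∀ (m : M) x, f (m • x) = f x) {c : ℕ}
    (h : ∀ x ∈ T, c ∣ (stabilizer M x).index * f x) : c ∣ ∑ x ∈ T, f x := by
  classical
  rw [← sum_fiberwise_of_maps_to (g := fun x => orbit M x) fun x hx => mem_image_of_mem _ hx]
  refine dvd_sum fun O hO => ?_
  obtain ⟨x₀, hx₀, rfl⟩ := mem_image.1 hO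
  have horbit : (({x ∈ T | orbit M x = orbit M x₀} : Finset α) : Set α) = orbit M x₀ := by
    ext x
    simp only [coe_filter, Set.mem_ofPred_eq, orbit_eq_iff, and_iff_right_iff_imp]
    rintro ⟨m, rfl⟩
    exact hT m x₀ hx₀
  have hconst : ∀ x ∈ ({x ∈ T | orbit M x = orbit M x₀} : Finset α), f x = f x₀ := by
    intro x hx
    obtain ⟨m, rfl⟩ := orbit_eq_iff.1 (mem_filter.1 hx).2
    exact hf m x₀
  rw [sum_congr rfl hconst, sum_const, smul_eq_mul, ← Set.ncard_coe_finset, horbit,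
    ← index_stabilizer]
  exact h x₀ hx₀

lemma coprime_card_pow_eq_one {A : Type*} [CommGroup A] [Finite A] {p m : ℕ} [Fact p.Prime]
    (hpm : ¬ p ∣ m) : p.Coprime (Nat.card {x : A // x ^ m = 1}) := by
  refine (Nat.Prime.coprime_iff_not_dvd Fact.out).2 fun hp => hpm ?_
  obtain ⟨x, hx⟩ := exists_prime_orderOf_dvd_card' (G := (powMonoidHom m : A →* A).ker) p hp
  rw [← hx, orderOf_dvd_iff_pow_eq_one]
  exact Subtype.ext x.2

section

variable {G : Type*} [Group G]

lemma card_pow_eq_one_eq_card_pow_gcd_card_eq_one (n : ℕ) :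
    Nat.card {x : G // x ^ n = 1} = Nat.card {x : G // x ^ n.gcd (Nat.card G) = 1} := by
  refine Nat.card_congr (Equiv.subtypeEquivRight fun x => ?_)
  simp only [← orderOf_dvd_iff_pow_eq_one, Nat.dvd_gcd_iff, _root_.orderOf_dvd_natCard, and_true]

lemma card_pow_card_eq_one [Finite G] : Nat.card {x : G // x ^ Nat.card G = 1} = Nat.card G :=
  Nat.card_congr (Equiv.subtypeUnivEquiv fun _ => pow_card_eq_one')

lemma card_subgroup_pow_eq_one (H : Subgroup G) (s : ℕ) :
    Nat.card {u : H // u ^ s = 1} = Nat.card {u : G // u ∈ H ∧ u ^ s = 1} := by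
  refine Nat.card_congr ((Equiv.subtypeEquivRight fun u => ?_).trans
    (Equiv.subtypeSubtypeEquivSubtypeInter (· ∈ H) (· ^ s = 1)))
  rw [← Subgroup.coe_pow, OneMemClass.coe_eq_one]

lemma card_zpowers_eq_zpowers_eq_totient [Finite G] (g : G) :
    Nat.card {x : G // zpowers x = zpowers g} = (orderOf g).totient := by
  classical
  have := Fintype.ofFinite G
  let e : {x : G // zpowers x = zpowers g} ≃ {h : zpowers g // orderOf h = orderOf g} :=
    { toFun x := ⟨⟨x, x.2.le (mem_zpowers x.1)⟩, by
        rw [orderOf_mk, ← Nat.card_zpowers, x.2, Nat.card_zpowers]⟩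
      invFun h := ⟨h.1, eq_of_le_of_card_ge (zpowers_le.2 h.1.2) (by
        rw [Nat.card_zpowers, Nat.card_zpowers, orderOf_coe, h.2])⟩
      left_inv _ := rfl
      right_inv _ := rfl }
  rw [Nat.card_congr e, Nat.card_eq_fintype_card, Fintype.card_subtype,
    IsCyclic.card_orderOf_eq_totient]
  rw [← Nat.card_eq_fintype_card, Nat.card_zpowers]

lemma totient_dvd_card_orderOf_eq [Finite G] (d : ℕ) :
    d.totient ∣ Nat.card {x : G // orderOf x = d} := by
  classical
  have := Fintype.ofFinite G
  rw [Nat.card_eq_fintype_card, Fintype.card_subtype, card_eq_sum_card_image zpowers]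
  refine dvd_sum fun H hH => ?_
  obtain ⟨g, hg, rfl⟩ := mem_image.1 hH
  rw [← (mem_filter_univ g).1 hg, ← card_zpowers_eq_zpowers_eq_totient, filter_filter]
  refine dvd_of_eq (Nat.subtype_card _ fun x => ?_)
  simp only [mem_filter_univ, and_iff_right_iff_imp]
  intro h
  rw [← Nat.card_zpowers, h, Nat.card_zpowers]

lemma card_pow_prime_pow_succ_eq_one [Finite G] {p : ℕ} [Fact p.Prime] (c : ℕ) :
    Nat.card {x : G // x ^ p ^ (c + 1) = 1}
      = Nat.card {x : G // x ^ p ^ c = 1} + Nat.card {x : G // orderOf x = p ^ (c + 1)} := by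
  classical
  have := Fintype.ofFinite G
  simp only [Nat.card_eq_fintype_card, Fintype.card_subtype]
  rw [← card_union_of_disjoint (disjoint_filter.2 fun x _ hx hord => ?_), ← filter_or]
  · congr! 2 with x
    refine ⟨fun h => or_iff_not_imp_left.2 fun hc => orderOf_eq_prime_pow hc h, ?_⟩
    rintro (h | h)
    · rw [pow_succ, pow_mul, h, one_pow]
    · rw [← h, pow_orderOf_eq_one]
  · have := orderOf_dvd_of_pow_eq_one hx
    rw [hord, Nat.pow_dvd_pow_iff_le_right (Fact.out : p.Prime).one_lt] at this
    omega

lemma card_pow_prime_pow_eq_one_modEq [Finite G] {p : ℕ} [Fact p.Prime] {b c : ℕ} (hbc : b ≤ c) :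
    Nat.card {x : G // x ^ p ^ c = 1} ≡ Nat.card {x : G // x ^ p ^ b = 1} [MOD p ^ b] := by
  induction c, hbc using Nat.le_induction with
  | base => rfl
  | succ c hbc ih =>
    refine Nat.ModEq.trans ?_ ih
    have hdvd : p ^ b ∣ Nat.card {x : G // orderOf x = p ^ (c + 1)} :=
      (pow_dvd_pow p hbc).trans <|
        (Nat.totient_prime_pow_succ (Fact.out : p.Prime) c ▸ dvd_mul_right _ _).trans
          (totient_dvd_card_orderOf_eq _)
    rw [card_pow_prime_pow_succ_eq_one]
    simpa using (Nat.modEq_zero_iff_dvd.2 hdvd).add_left (Nat.card {x : G // x ^ p ^ c = 1})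

lemma card_pow_mul_eq_one_eq_sum [Fintype G] [DecidableEq G] {s t : ℕ} (hst : s.Coprime t) :
    Nat.card {x : G // x ^ (s * t) = 1}
      = ∑ w ∈ {w : G | w ^ t = 1}, Nat.card {u : G // Commute w u ∧ u ^ s = 1} := by
  obtain ⟨N, hNs, hNt⟩ := Nat.chineseRemainder hst 0 1
  obtain ⟨M, hMs, hMt⟩ := Nat.chineseRemainder hst 1 0
  have hsN : s ∣ N := Nat.modEq_zero_iff_dvd.1 hNs
  have htM : t ∣ M := Nat.modEq_zero_iff_dvd.1 hMt
  have hMN : M + N ≡ 1 [MOD s * t] :=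
    (Nat.modEq_and_modEq_iff_modEq_mul hst).1
      ⟨by simpa using hMs.add hNs, by simpa using hMt.add hNt⟩
  let e : {x : G // x ^ (s * t) = 1} ≃
      Σ w : {w : G // w ^ t = 1}, {u : G // Commute w.1 u ∧ u ^ s = 1} :=
    { toFun x := ⟨⟨x.1 ^ N, by
          rw [← pow_mul]; exact pow_eq_one_of_dvd x.2 (mul_dvd_mul_right hsN t)⟩,
        ⟨x.1 ^ M, Commute.pow_pow_self _ _ _, by
          rw [← pow_mul]; exact pow_eq_one_of_dvd x.2 (mul_comm t s ▸ mul_dvd_mul_right htM s)⟩⟩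
      invFun wu := ⟨wu.2.1 * wu.1.1, by
        rw [wu.2.2.1.symm.mul_pow, pow_mul, wu.2.2.2, one_pow, one_mul, mul_comm, pow_mul,
          wu.1.2, one_pow]⟩
      left_inv x := Subtype.ext <| by
        change x.1 ^ M * x.1 ^ N = x.1
        rw [← pow_add, pow_eq_pow_of_modEq hMN x.2, pow_one]
      right_inv := by
        rintro ⟨⟨w, hw⟩, ⟨u, hwu, hu⟩⟩
        change Commute w u at hwu
        refine Sigma.subtype_ext (Subtype.ext ?_) ?_
        · change (u * w) ^ N = w
          rw [hwu.symm.mul_pow, pow_eq_one_of_dvd hu hsN, one_mul, pow_eq_pow_of_modEq hNt hw,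
            pow_one]
        · change (u * w) ^ M = u
          rw [hwu.symm.mul_pow, pow_eq_one_of_dvd hw htM, mul_one, pow_eq_pow_of_modEq hMs hu,
            pow_one] }
  rw [Nat.card_congr e, Nat.card_sigma, sum_subtype _ fun w => mem_filter_univ w]

lemma index_stabilizer_conjAct (w : G) :
    (stabilizer (ConjAct G) w).index = (centralizer {w}).index := by
  rw [centralizer_eq_comap_stabilizer]
  exact (index_comap_of_surjective _ ConjAct.toConjAct.surjective).symm

lemma card_commute_pow_eq_one_conj (g w : G) (s : ℕ) :
    Nat.card {u : G // Commute (g * w * g⁻¹) u ∧ u ^ s = 1}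
      = Nat.card {u : G // Commute w u ∧ u ^ s = 1} := by
  refine Nat.card_congr ((MulAut.conj g).toEquiv.subtypeEquiv fun u => ?_).symm
  simp [Commute.conj_iff, conj_pow]

lemma card_commute_pow_eq_one_eq_card_centralizer (w : G) (s : ℕ) :
    Nat.card {u : G // Commute w u ∧ u ^ s = 1}
      = Nat.card {u : centralizer {w} // u ^ s = 1} := by
  rw [card_subgroup_pow_eq_one]
  refine Nat.card_congr (Equiv.subtypeEquivRight fun u => ?_)
  rw [mem_centralizer_singleton_iff, Commute, SemiconjBy, eq_comm]

lemma dvd_sum_card_commute_pow_eq_one [Finite G] {s : ℕ} (hs : s ∣ Nat.card G) {T : Finset G}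
    (hT : ∀ g, ∀ w ∈ T, g * w * g⁻¹ ∈ T)
    (h : ∀ w ∈ T,
      s.gcd (Nat.card (centralizer {w})) ∣ Nat.card {u : centralizer {w} // u ^ s = 1}) :
    s ∣ ∑ w ∈ T, Nat.card {u : G // Commute w u ∧ u ^ s = 1} := by
  refine dvd_sum_of_dvd_index_stabilizer_mul (M := ConjAct G) (fun g w hw => hT _ w hw)
    (fun g w => card_commute_pow_eq_one_conj _ w s) fun w hw => ?_
  rw [index_stabilizer_conjAct, card_commute_pow_eq_one_eq_card_centralizer]
  exact dvd_index_mul_of_gcd_card_dvd _ hs (h w hw)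

lemma card_centralizer_lt_card [Finite G] {w : G} (hw : w ∉ center G) :
    Nat.card (centralizer {w}) < Nat.card G := by
  refine card_le_card_group _ |>.lt_of_ne fun h => hw ?_
  rw [card_eq_iff_eq_top, centralizer_eq_top_iff_subset] at h
  exact h rfl

open scoped IsMulCommutative in
lemma ordProj_dvd_card_pow_ordProj_eq_one [Finite G] {p : ℕ} [Fact p.Prime]
    (h : ∀ w : G, w ∉ center G → (ordProj[p] (Nat.card G)).gcd (Nat.card (centralizer {w}))
        ∣ Nat.card {u : centralizer {w} // u ^ ordProj[p] (Nat.card G) = 1}) :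
    ordProj[p] (Nat.card G) ∣ Nat.card {x : G // x ^ ordProj[p] (Nat.card G) = 1} := by
  classical
  have := Fintype.ofFinite G
  set q := ordProj[p] (Nat.card G)
  set m := ordCompl[p] (Nat.card G)
  have hp : p.Prime := Fact.out
  have hpm : ¬ p ∣ m := Nat.not_dvd_ordCompl hp (Nat.card_pos (α := G)).ne'
  have hcop : q.Coprime m := (Nat.coprime_ordCompl hp (Nat.card_pos (α := G)).ne').pow_left _
  have hsplit := card_pow_mul_eq_one_eq_sum (G := G) hcop
  rw [Nat.ordProj_mul_ordCompl_eq_self, card_pow_card_eq_one,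
    ← sum_filter_add_sum_filter_not _ (· ∈ center G)] at hsplit
  have hcentral : ∑ w ∈ {w : G | w ^ m = 1} with w ∈ center G,
      Nat.card {u : G // Commute w u ∧ u ^ q = 1}
        = Nat.card {z : center G // z ^ m = 1} * Nat.card {x : G // x ^ q = 1} := by
    rw [sum_congr rfl fun w hw => ?_, sum_const, smul_eq_mul, card_subgroup_pow_eq_one,
      filter_filter, Nat.subtype_card]
    · simp [and_comm]
    · exact Nat.card_congr (Equiv.subtypeEquivRight fun u =>
        and_iff_right (mem_center_iff.1 (mem_filter.1 hw).2 u).symm)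
  have hnoncentral : q ∣ ∑ w ∈ {w : G | w ^ m = 1} with w ∉ center G,
      Nat.card {u : G // Commute w u ∧ u ^ q = 1} := by
    refine dvd_sum_card_commute_pow_eq_one (Nat.ordProj_dvd _ _) (fun g w hw => ?_)
      fun w hw => h w (mem_filter.1 hw).2
    simp only [mem_filter, mem_univ, true_and] at hw ⊢
    refine ⟨by rw [conj_pow, hw.1, mul_one, mul_inv_cancel], fun hz => hw.2 ?_⟩
    simpa [mul_assoc] using (inferInstance : (center G).Normal).conj_mem' _ hz g
  have hq : q ∣ Nat.card G := Nat.ordProj_dvd _ _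
  rw [hsplit, hcentral, Nat.dvd_add_left hnoncentral] at hq
  exact ((coprime_card_pow_eq_one hpm).pow_left _).dvd_of_dvd_mul_left hq

lemma gcd_dvd_card_pow_prime_pow_eq_one {p : ℕ} [Fact p.Prime]
    (hG : ∀ b, p ^ b ∣ Nat.card G → p ^ b ∣ Nat.card {x : G // x ^ p ^ b = 1}) (a : ℕ) :
    (p ^ a).gcd (Nat.card G) ∣ Nat.card {x : G // x ^ p ^ a = 1} := by
  obtain ⟨b, -, hb⟩ := (Nat.dvd_prime_pow Fact.out).1 (Nat.gcd_dvd_left (p ^ a) (Nat.card G))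
  rw [card_pow_eq_one_eq_card_pow_gcd_card_eq_one, hb]
  exact hG b (hb ▸ Nat.gcd_dvd_right _ _)

theorem prime_pow_dvd_card_pow_eq_one [Finite G] {p : ℕ} [Fact p.Prime] {b : ℕ}
    (hb : p ^ b ∣ Nat.card G) : p ^ b ∣ Nat.card {x : G // x ^ p ^ b = 1} := by
  induction hN : Nat.card G using Nat.strong_induction_on generalizing G b with
  | _ N ih =>
  have hv : ordProj[p] (Nat.card G) ∣ Nat.card {x : G // x ^ ordProj[p] (Nat.card G) = 1} :=
    ordProj_dvd_card_pow_ordProj_eq_one fun w hw => gcd_dvd_card_pow_prime_pow_eq_one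
      (fun c hc => ih _ (hN ▸ card_centralizer_lt_card hw) hc rfl) _
  have hbv : b ≤ (Nat.card G).factorization p :=
    (Nat.Prime.pow_dvd_iff_le_factorization Fact.out Nat.card_pos.ne').1 hb
  exact ((card_pow_prime_pow_eq_one_modEq hbv).dvd_iff dvd_rfl).1 ((pow_dvd_pow p hbv).trans hv)

end

/-- Frobenius: if `n` is a positive divisor of `|G|`, then `n` divides the number of
solutions of `x ^ n = 1` in `G`. -/
theorem stmt1 {G : Type*} [Group G] [Finite G] (n : ℕ) (hn : 0 < n)
    (hdvd : n ∣ Nat.card G) : n ∣ Nat.card {x : G // x ^ n = 1} := by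
  classical
  have := Fintype.ofFinite G
  refine (Nat.dvd_iff_prime_pow_dvd_dvd _ n).2 fun p k hp hpk => ?_
  have := Fact.mk hp
  have hk : p ^ k ∣ ordProj[p] n :=
    pow_dvd_pow p ((hp.pow_dvd_iff_le_factorization hn.ne').1 hpk)
  have hsplit := card_pow_mul_eq_one_eq_sum (G := G)
    ((Nat.coprime_ordCompl hp hn.ne').pow_left (n.factorization p))
  rw [Nat.ordProj_mul_ordCompl_eq_self] at hsplit
  rw [hsplit]
  refine hk.trans (dvd_sum_card_commute_pow_eq_one ((Nat.ordProj_dvd n p).trans hdvd) ?_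
    fun w _ => gcd_dvd_card_pow_prime_pow_eq_one (fun _ => prime_pow_dvd_card_pow_eq_one) _)
  intro g w hw
  simp only [mem_filter, mem_univ, true_and] at hw ⊢
  rw [conj_pow, hw, mul_one, mul_inv_cancel]
end

section
/- Let G be a finite group, π a set of primes, and q ∈ π. Let S_q(G_π) denote the union of conjugacy classes of π-elements of G whose size is a power of q. Then the cardinality of S_q(G_π) is congruent to the number of π-elements of Z(G) modulo q. -/
/-!
A Sylow `q`-subgroup `Q` of `G` acts by conjugation on the set `S` of π-elements whose class
size is a power of `q`, so `|S|` is congruent mod `q` to the number of points of `S` fixed by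
`Q`. If `Q` centralizes `g ∈ S`, then `|G : C_G(g)|` is a power of `q` dividing `|G : Q|`, which
is prime to `q`; hence `g` is central. Conversely every central π-element lies in `S` and is
fixed.
-/

/-- A π-element: every prime dividing its order lies in π. -/
def IsPiElement {G : Type*} [Group G] (π : Set ℕ) (g : G) : Prop :=
  ∀ p : ℕ, p.Prime → p ∣ orderOf g → p ∈ π

open MulAction

section Action

variable {G α : Type*} [Group G] [MulAction G α]

variable (G α) in
def MulAction.pPowerOrbitPoints (p : ℕ) : SubMulAction G α where
  carrier := {a | ∃ k : ℕ, (stabilizer G a).index = p ^ k}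
  smul_mem' g a := by simp only [Set.mem_ofPred_eq, index_stabilizer, orbit_smul, imp_self]

@[simp]
theorem MulAction.mem_pPowerOrbitPoints {p : ℕ} {a : α} :
    a ∈ pPowerOrbitPoints G α p ↔ ∃ k : ℕ, (stabilizer G a).index = p ^ k :=
  Iff.rfl

theorem SubMulAction.mem_fixedPoints_iff {M : Type*} [Monoid M] [MulAction M α]
    {s : SubMulAction M α} {a : s} : a ∈ fixedPoints M s ↔ (a : α) ∈ fixedPoints M α :=
  forall_congr' fun _ => Subtype.ext_iff

theorem Sylow.mem_fixedPoints_of_le_stabilizer [Finite G] {p : ℕ} [Fact p.Prime]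
    (P : Sylow p G) {a : α} (ha : a ∈ pPowerOrbitPoints G α p)
    (hP : (P : Subgroup G) ≤ stabilizer G a) : a ∈ fixedPoints G α := by
  obtain ⟨k, hk⟩ := ha
  have hk0 : k = 0 := by
    by_contra hk0
    exact P.not_dvd_index ((dvd_pow_self p hk0).trans (hk ▸ Subgroup.index_dvd_of_le hP))
  rw [hk0, pow_zero, Subgroup.index_eq_one] at hk
  exact (Subgroup.eq_top_iff' _).mp hk

theorem MulAction.card_pPowerOrbitPoints_modEq_card_fixedPoints [Finite G] [Finite α] (p : ℕ)
    [Fact p.Prime] :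
    Nat.card (pPowerOrbitPoints G α p) ≡ Nat.card (fixedPoints G α) [MOD p] := by
  obtain ⟨P⟩ := Sylow.nonempty (p := p) (G := G)
  have e : fixedPoints P (pPowerOrbitPoints G α p) ≃ fixedPoints G α :=
    { toFun := fun a => ⟨a.1, P.mem_fixedPoints_of_le_stabilizer a.1.2 fun g hg =>
          congrArg Subtype.val (a.2 ⟨g, hg⟩)⟩
      invFun := fun a => ⟨⟨a, 0, by
          rw [pow_zero, Subgroup.index_eq_one]; exact (Subgroup.eq_top_iff' _).mpr a.2⟩,
          fun g => Subtype.ext (a.2 g)⟩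
      left_inv := fun _ => rfl
      right_inv := fun _ => rfl }
  rw [← Nat.card_congr e]
  exact P.isPGroup'.card_modEq_card_fixedPoints _

end Action

section PiElements

variable {G : Type*} [Group G]

theorem ConjAct.index_stabilizer (g : G) :
    (stabilizer (ConjAct G) g).index = (Subgroup.centralizer {g}).index := by
  rw [Subgroup.centralizer_eq_comap_stabilizer]
  exact (Subgroup.index_comap_of_surjective _ ConjAct.toConjAct.surjective).symm

variable (G) in
def piElements (π : Set ℕ) : SubMulAction (ConjAct G) G where
  carrier := {g | IsPiElement π g}
  smul_mem' c g hg := by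
    rwa [Set.mem_ofPred_eq, IsPiElement, ConjAct.smul_def, ← MulAut.conj_apply,
      MulEquiv.orderOf_eq]

theorem mem_fixedPoints_piElements_iff {π : Set ℕ} {g : piElements G π} :
    g ∈ fixedPoints (ConjAct G) (piElements G π) ↔ (g : G) ∈ Subgroup.center G := by
  rw [SubMulAction.mem_fixedPoints_iff, ConjAct.fixedPoints_eq_center, SetLike.mem_coe]

def piElementsEquivPPowerOrbitPoints (π : Set ℕ) (q : ℕ) :
    {g : G // IsPiElement π g ∧ ∃ k : ℕ, (Subgroup.centralizer {g}).index = q ^ k} ≃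
      pPowerOrbitPoints (ConjAct G) (piElements G π) q :=
  (Equiv.subtypeSubtypeEquivSubtypeInter (· ∈ piElements G π) _).symm.trans <|
    Equiv.subtypeEquivRight fun g => by
      rw [mem_pPowerOrbitPoints, SubMulAction.stabilizer_of_subMul, ConjAct.index_stabilizer]

def fixedPointsPiElementsEquiv (π : Set ℕ) :
    fixedPoints (ConjAct G) (piElements G π) ≃
      {z : Subgroup.center G // IsPiElement π (z : G)} where
  toFun g := ⟨⟨g.1, mem_fixedPoints_piElements_iff.mp g.2⟩, g.1.2⟩
  invFun z := ⟨⟨z.1, z.2⟩, mem_fixedPoints_piElements_iff.mpr z.1.2⟩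
  left_inv _ := rfl
  right_inv _ := rfl

end PiElements

theorem stmt2_general {G : Type*} [Group G] [Finite G] (π : Set ℕ) (q : ℕ)
    (hq : q.Prime) :
    Nat.card {g : G // IsPiElement π g ∧ ∃ k : ℕ, (Subgroup.centralizer {g}).index = q ^ k}
      ≡ Nat.card {z : Subgroup.center G // IsPiElement π (z : G)} [MOD q] := by
  have : Fact q.Prime := ⟨hq⟩
  have : Finite (ConjAct G) := ‹Finite G›
  rw [Nat.card_congr (piElementsEquivPPowerOrbitPoints π q),
    ← Nat.card_congr (fixedPointsPiElementsEquiv π)]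
  exact card_pPowerOrbitPoints_modEq_card_fixedPoints q

/-- `|S_q(G_π)| ≡ |Z(G)_π| (mod q)`: the number of π-elements of `G` whose conjugacy
class size is a power of `q` is congruent mod `q` to the number of central π-elements. -/
theorem stmt2 {G : Type*} [Group G] [Finite G] (π : Set ℕ) (q : ℕ)
    (hq : q.Prime) (hqπ : q ∈ π) :
    Nat.card {g : G // IsPiElement π g ∧ ∃ k : ℕ, (Subgroup.centralizer {g}).index = q ^ k}
      ≡ Nat.card {z : Subgroup.center G // IsPiElement π (z : G)} [MOD q] :=
  stmt2_general π q hq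
end

section
/- Let G be a finite group, N a central subgroup of G, and g ∈ G. Define α : C → N on C = {x ∈ G : [g,x] ∈ N} by α(x) = [g,x] = g⁻¹x⁻¹gx. Then α is a group homomorphism with kernel C_G(g); in particular, the index |C : C_G(g)| divides |N|. -/
section CommutatorHom

variable {G : Type*} [Group G]

/-- `[g, xy] = y⁻¹ [g, x] y [g, y]`, and the conjugation by `y` disappears since `[g, x]` is central. -/
theorem commutator_mul_right_of_mem_center {g x : G} (y : G)
    (hx : g⁻¹ * x⁻¹ * g * x ∈ Subgroup.center G) :
    g⁻¹ * (x * y)⁻¹ * g * (x * y) = (g⁻¹ * x⁻¹ * g * x) * (g⁻¹ * y⁻¹ * g * y) := by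
  calc g⁻¹ * (x * y)⁻¹ * g * (x * y)
      = (g⁻¹ * y⁻¹ * g) * (g⁻¹ * x⁻¹ * g * x) * y := by group
    _ = (g⁻¹ * x⁻¹ * g * x) * (g⁻¹ * y⁻¹ * g) * y := by
        rw [Subgroup.mem_center_iff.mp hx]
    _ = (g⁻¹ * x⁻¹ * g * x) * (g⁻¹ * y⁻¹ * g * y) := by group

theorem commutator_eq_one_iff_mem_centralizer (g x : G) :
    g⁻¹ * x⁻¹ * g * x = 1 ↔ x ∈ Subgroup.centralizer {g} := by
  rw [Subgroup.mem_centralizer_singleton_iff,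
    show g⁻¹ * x⁻¹ * g * x = (x * g)⁻¹ * (g * x) by group, inv_mul_eq_one, eq_comm]

variable {N : Subgroup G} {g : G} {C : Subgroup G}

def commutatorHom (hN : N ≤ Subgroup.center G) (hC : ∀ x : G, x ∈ C ↔ g⁻¹ * x⁻¹ * g * x ∈ N) :
    C →* N where
  toFun x := ⟨g⁻¹ * (x : G)⁻¹ * g * x, (hC x).mp x.2⟩
  map_one' := by ext; simp
  map_mul' x y := Subtype.ext <| commutator_mul_right_of_mem_center (y : G) (hN ((hC x).mp x.2))

theorem ker_commutatorHom (hN : N ≤ Subgroup.center G)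
    (hC : ∀ x : G, x ∈ C ↔ g⁻¹ * x⁻¹ * g * x ∈ N) :
    (commutatorHom hN hC).ker = (Subgroup.centralizer {g}).subgroupOf C := by
  ext x
  rw [MonoidHom.mem_ker, Subgroup.mem_subgroupOf, ← commutator_eq_one_iff_mem_centralizer]
  exact Subgroup.mk_eq_one (H := N)

end CommutatorHom

theorem Subgroup.relIndex_dvd_card_of_ker_eq {G M : Type*} [Group G] [Group M]
    {K H : Subgroup G} (f : H →* M) (hf : f.ker = K.subgroupOf H) :
    K.relIndex H ∣ Nat.card M := by
  rw [Subgroup.relIndex, ← hf, Subgroup.index_ker]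
  exact Subgroup.card_subgroup_dvd_card f.range

theorem stmt4_general {G : Type*} [Group G] (N : Subgroup G)
    (hN : N ≤ Subgroup.center G) (g : G) (C : Subgroup G)
    (hC : ∀ x : G, x ∈ C ↔ g⁻¹ * x⁻¹ * g * x ∈ N) :
    (∀ x ∈ C, ∀ y ∈ C,
      g⁻¹ * (x * y)⁻¹ * g * (x * y) = (g⁻¹ * x⁻¹ * g * x) * (g⁻¹ * y⁻¹ * g * y)) ∧
    (∀ x ∈ C, (g⁻¹ * x⁻¹ * g * x = 1 ↔ x ∈ Subgroup.centralizer {g})) ∧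
    (Subgroup.centralizer {g}).relIndex C ∣ Nat.card N :=
  ⟨fun x hx y _ => commutator_mul_right_of_mem_center y (hN ((hC x).mp hx)),
    fun x _ => commutator_eq_one_iff_mem_centralizer g x,
    Subgroup.relIndex_dvd_card_of_ker_eq _ (ker_commutatorHom hN hC)⟩

/-- For `N ≤ Z(G)`, `g ∈ G`, and `C = {x : [g,x] ∈ N}`, the map `x ↦ [g,x] = g⁻¹x⁻¹gx`
is a homomorphism `C → N` with kernel `C_G(g)`; in particular `|C : C_G(g)|` divides `|N|`. -/
theorem stmt4 {G : Type*} [Group G] [Finite G] (N : Subgroup G)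
    (hN : N ≤ Subgroup.center G) (g : G) (C : Subgroup G)
    (hC : ∀ x : G, x ∈ C ↔ g⁻¹ * x⁻¹ * g * x ∈ N) :
    (∀ x ∈ C, ∀ y ∈ C,
      g⁻¹ * (x * y)⁻¹ * g * (x * y) = (g⁻¹ * x⁻¹ * g * x) * (g⁻¹ * y⁻¹ * g * y)) ∧
    (∀ x ∈ C, (g⁻¹ * x⁻¹ * g * x = 1 ↔ x ∈ Subgroup.centralizer {g})) ∧
    (Subgroup.centralizer {g}).relIndex C ∣ Nat.card N :=
  stmt4_general N hN g C hC
end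

section
/- Let G be a finite group, N a central subgroup of G of prime order q, and write Ḡ = G/N. Suppose π is a set of primes with q ∈ π. Let ḡ ∈ Ḡ be a π-element with conjugacy class size a power of q, and let g be a π-element preimage of ḡ. If C_G(g) equals the full preimage C of C_Ḡ(ḡ), then the q distinct elements g, gz, ..., gz^{q-1} (where N = ⟨z⟩) are π-elements lying in q pairwise distinct conjugacy classes of G, all of size |ḡ^Ḡ|. -/
namespace IsPiElement

variable {G : Type*} [Group G] {π : Set ℕ}

theorem mul_of_commute {a b : G} (hab : Commute a b) (ha : IsPiElement π a)
    (hb : IsPiElement π b) : IsPiElement π (a * b) := fun p hp hpd =>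
  (hp.dvd_mul.mp (hpd.trans hab.orderOf_mul_dvd_mul_orderOf)).elim (ha p hp) (hb p hp)

theorem of_pow_prime_eq_one {q : ℕ} (hq : q.Prime) (hqπ : q ∈ π) {x : G} (hx : x ^ q = 1) :
    IsPiElement π x := fun p hp hpd => by
  rwa [(Nat.prime_dvd_prime_iff_eq hp hq).mp (hpd.trans (orderOf_dvd_of_pow_eq_one hx))]

end IsPiElement

section CentralTranslates

variable {G : Type*} [Group G]

theorem Subgroup.centralizer_singleton_mul_of_mem_center {g c : G} (hc : c ∈ Subgroup.center G) :
    Subgroup.centralizer {g * c} = Subgroup.centralizer {g} := by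
  have hcomm : ∀ x : G, Commute x c := Subgroup.mem_center_iff.mp hc
  ext x
  simp only [Subgroup.mem_centralizer_singleton_iff]
  change Commute x (g * c) ↔ Commute x g
  refine ⟨fun h => ?_, fun h => h.mul_right (hcomm x)⟩
  simpa using h.mul_right (hcomm x).inv_right

theorem mem_comap_centralizer_of_conj_mul_mem {N : Subgroup G} [N.Normal] {g a b x : G}
    (ha : a ∈ N) (hb : b ∈ N) (hx : x * (g * a) * x⁻¹ = g * b) :
    x ∈ Subgroup.comap (QuotientGroup.mk' N) (Subgroup.centralizer {(g : G ⧸ N)}) := by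
  have hbar := congrArg (QuotientGroup.mk (s := N)) hx
  simp only [QuotientGroup.mk_mul, QuotientGroup.mk_inv, (QuotientGroup.eq_one_iff _).mpr ha,
    (QuotientGroup.eq_one_iff _).mpr hb, mul_one] at hbar
  rw [Subgroup.mem_comap, Subgroup.mem_centralizer_singleton_iff, QuotientGroup.mk'_apply]
  exact mul_inv_eq_iff_eq_mul.mp hbar

theorem eq_of_isConj_mul_of_mem {N : Subgroup G} [N.Normal] (hN : N ≤ Subgroup.center G)
    {g a b : G} (hC : Subgroup.comap (QuotientGroup.mk' N)
        (Subgroup.centralizer {(g : G ⧸ N)}) = Subgroup.centralizer {g})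
    (ha : a ∈ N) (hb : b ∈ N) (h : IsConj (g * a) (g * b)) : a = b := by
  obtain ⟨x, hx⟩ := isConj_iff.mp h
  have hxg : x ∈ Subgroup.centralizer {g * a} := by
    rw [Subgroup.centralizer_singleton_mul_of_mem_center (hN ha), ← hC]
    exact mem_comap_centralizer_of_conj_mul_mem ha hb hx
  rw [Subgroup.mem_centralizer_singleton_iff] at hxg
  rw [hxg, mul_inv_cancel_right] at hx
  exact mul_left_cancel hx

end CentralTranslates

theorem stmt5_general {G : Type*} [Group G] (π : Set ℕ) (q : ℕ)
    (hq : q.Prime) (hqπ : q ∈ π) (N : Subgroup G) [N.Normal]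
    (hN : N ≤ Subgroup.center G) (hcard : Nat.card N = q)
    (z : G) (hz : N = Subgroup.zpowers z)
    (g : G) (hg : IsPiElement π g)
    (hC : Subgroup.comap (QuotientGroup.mk' N)
        (Subgroup.centralizer {(g : G ⧸ N)}) = Subgroup.centralizer {g}) :
    (∀ i < q, IsPiElement π (g * z ^ i)) ∧
    (∀ i < q, ∀ j < q, IsConj (g * z ^ i) (g * z ^ j) → i = j) ∧
    (∀ i < q, (Subgroup.centralizer {g * z ^ i}).index
        = (Subgroup.centralizer {(g : G ⧸ N)}).index) := by
  have hzN : ∀ i : ℕ, z ^ i ∈ N := fun i => hz ▸ Subgroup.npow_mem_zpowers z i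
  have horder : orderOf z = q := by rw [← Nat.card_zpowers, ← hz, hcard]
  refine ⟨fun i _ => ?_, fun i hi j hj hij => ?_, fun i _ => ?_⟩
  · refine hg.mul_of_commute (Subgroup.mem_center_iff.mp (hN (hzN i)) g)
      (IsPiElement.of_pow_prime_eq_one hq hqπ ?_)
    rw [pow_right_comm, ← horder, pow_orderOf_eq_one, one_pow]
  · exact pow_injOn_Iio_orderOf (horder ▸ hi) (horder ▸ hj)
      (eq_of_isConj_mul_of_mem hN hC (hzN i) (hzN j) hij)
  · rw [Subgroup.centralizer_singleton_mul_of_mem_center (hN (hzN i)), ← hC]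
    exact Subgroup.index_comap_of_surjective _ (QuotientGroup.mk'_surjective N)

/-- If `N = ⟨z⟩ ≤ Z(G)` has prime order `q ∈ π`, `g` is a π-element whose image in `G/N`
has class size a power of `q`, and `C_G(g)` is the full preimage of `C_{G/N}(gN)`, then
`g, gz, …, gz^{q-1}` are π-elements lying in `q` pairwise distinct conjugacy classes,
all of size `|ḡ^{G/N}|`. -/
theorem stmt5 {G : Type*} [Group G] [Finite G] (π : Set ℕ) (q : ℕ)
    (hq : q.Prime) (hqπ : q ∈ π) (N : Subgroup G) [N.Normal]
    (hN : N ≤ Subgroup.center G) (hcard : Nat.card N = q)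
    (z : G) (hz : N = Subgroup.zpowers z)
    (g : G) (hg : IsPiElement π g)
    (hclass : ∃ k : ℕ, (Subgroup.centralizer {(g : G ⧸ N)}).index = q ^ k)
    (hC : Subgroup.comap (QuotientGroup.mk' N)
        (Subgroup.centralizer {(g : G ⧸ N)}) = Subgroup.centralizer {g}) :
    (∀ i < q, IsPiElement π (g * z ^ i)) ∧
    (∀ i < q, ∀ j < q, IsConj (g * z ^ i) (g * z ^ j) → i = j) ∧
    (∀ i < q, (Subgroup.centralizer {g * z ^ i}).index
        = (Subgroup.centralizer {(g : G ⧸ N)}).index) :=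
  stmt5_general π q hq hqπ N hN hcard z hz g hg hC
end

section
/- Let G be a finite group, N a central subgroup of prime order q, q ∈ π for a set of primes π. Then the number of π-elements of G whose conjugacy class size is a power of q equals q times the number of π-elements of G/N whose conjugacy class size (in G/N) is a power of q. That is, |S_q(G_π)| = q · |S_q((G/N)_π)|. -/
open Subgroup QuotientGroup
open scoped commutatorElement

section

variable {G : Type*} [Group G]

theorem QuotientGroup.card_subtype_mk (s : Subgroup G) (P : G ⧸ s → Prop) :
    Nat.card {g : G // P g} = Nat.card s * Nat.card {x : G ⧸ s // P x} := by
  rw [← Nat.card_prod]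
  exact Nat.card_congr (preimageMkEquivSubgroupProdSet s {x | P x})

theorem IsPiElement.map {H : Type*} [Group H] {π : Set ℕ} {g : G} (hg : IsPiElement π g)
    (f : G →* H) : IsPiElement π (f g) :=
  fun p hp hdvd => hg p hp (hdvd.trans (orderOf_map_dvd f g))

section Quotient

variable (N : Subgroup G) [N.Normal]

theorem orderOf_dvd_orderOf_mk_mul_card (g : G) :
    orderOf g ∣ orderOf (g : G ⧸ N) * Nat.card N := by
  have hmem : g ^ orderOf (g : G ⧸ N) ∈ N := by
    rw [← eq_one_iff, mk_pow, pow_orderOf_eq_one]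
  apply orderOf_dvd_of_pow_eq_one
  rw [pow_mul]
  exact congrArg Subtype.val (pow_card_eq_one' (x := (⟨_, hmem⟩ : N)))

theorem isPiElement_mk_iff {π : Set ℕ} (hN : ∀ p : ℕ, p.Prime → p ∣ Nat.card N → p ∈ π)
    (g : G) : IsPiElement π (g : G ⧸ N) ↔ IsPiElement π g := by
  refine ⟨fun hgN p hp hdvd => ?_, fun hg => hg.map (mk' N)⟩
  rcases hp.dvd_mul.mp (hdvd.trans (orderOf_dvd_orderOf_mk_mul_card N g)) with h | h
  · exact hgN p hp h
  · exact hN p hp h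

theorem map_centralizer_singleton_le {H : Type*} [Group H] (f : G →* H) (g : G) :
    (centralizer {g}).map f ≤ centralizer {f g} := by
  simpa only [Set.image_singleton] using map_centralizer_le_centralizer_image {g} f

theorem index_centralizer_map_dvd {H : Type*} [Group H] {f : G →* H}
    (hf : Function.Surjective f) (g : G) :
    (centralizer {f g}).index ∣ (centralizer {g}).index :=
  (index_dvd_of_le (map_centralizer_singleton_le f g)).trans (index_map_dvd _ hf)

theorem commutatorElement_mem_of_mem_comap_centralizer {g h : G}
    (hh : h ∈ (centralizer {(g : G ⧸ N)}).comap (mk' N)) : ⁅h, g⁆ ∈ N := by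
  rw [mem_comap, mem_centralizer_singleton_iff] at hh
  rw [← eq_one_iff, ← mk'_apply, map_commutatorElement, commutatorElement_eq_one_iff_mul_comm]
  exact hh

theorem commutatorElement_mul_left_of_mem_center {g h₂ : G} (h₁ : G)
    (h₂c : ⁅h₂, g⁆ ∈ center G) : ⁅h₁ * h₂, g⁆ = ⁅h₁, g⁆ * ⁅h₂, g⁆ := by
  calc ⁅h₁ * h₂, g⁆ = h₁ * ⁅h₂, g⁆ * (g * h₁⁻¹ * g⁻¹) := by
        simp only [commutatorElement_def]; group
    _ = ⁅h₂, g⁆ * ⁅h₁, g⁆ := by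
        rw [mem_center_iff.mp h₂c h₁, commutatorElement_def]; group
    _ = ⁅h₁, g⁆ * ⁅h₂, g⁆ := (mem_center_iff.mp h₂c _).symm

variable {N}

def commutatorHomOfLeCenter (hN : N ≤ center G) (g : G) :
    (centralizer {(g : G ⧸ N)}).comap (mk' N) →* N where
  toFun h := ⟨⁅(h : G), g⁆, commutatorElement_mem_of_mem_comap_centralizer N h.2⟩
  map_one' := by ext; simp
  map_mul' h₁ h₂ := Subtype.ext <| commutatorElement_mul_left_of_mem_center (h₁ : G)
    (hN (commutatorElement_mem_of_mem_comap_centralizer N h₂.2))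

theorem ker_commutatorHomOfLeCenter (hN : N ≤ center G) (g : G) :
    (commutatorHomOfLeCenter hN g).ker =
      (centralizer {g}).subgroupOf ((centralizer {(g : G ⧸ N)}).comap (mk' N)) := by
  ext h
  rw [MonoidHom.mem_ker, mem_subgroupOf, mem_centralizer_singleton_iff, Subtype.ext_iff]
  exact commutatorElement_eq_one_iff_mul_comm

theorem index_centralizer_dvd_card_mul_index (hN : N ≤ center G) (g : G) :
    (centralizer {g}).index ∣ Nat.card N * (centralizer {(g : G ⧸ N)}).index := by
  have hle : centralizer {g} ≤ (centralizer {(g : G ⧸ N)}).comap (mk' N) :=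
    map_le_iff_le_comap.mp (map_centralizer_singleton_le (mk' N) g)
  have hrel : (centralizer {g}).relIndex ((centralizer {(g : G ⧸ N)}).comap (mk' N)) ∣
      Nat.card N := by
    rw [relIndex, ← ker_commutatorHomOfLeCenter hN g, index_ker]
    exact card_subgroup_dvd_card _
  rw [← relIndex_mul_index hle, index_comap_of_surjective _ (mk'_surjective N)]
  exact mul_dvd_mul_right hrel _

theorem exists_index_centralizer_mk_eq_pow_iff {q m : ℕ} (hq : q.Prime) (hN : N ≤ center G)
    (hcard : Nat.card N = q ^ m) (g : G) :
    (∃ k : ℕ, (centralizer {(g : G ⧸ N)}).index = q ^ k) ↔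
      ∃ k : ℕ, (centralizer {g}).index = q ^ k := by
  constructor
  · rintro ⟨k, hk⟩
    have hdvd := index_centralizer_dvd_card_mul_index hN g
    rw [hcard, hk, ← pow_add] at hdvd
    obtain ⟨i, -, hi⟩ := (Nat.dvd_prime_pow hq).mp hdvd
    exact ⟨i, hi⟩
  · rintro ⟨k, hk⟩
    have hdvd := index_centralizer_map_dvd (mk'_surjective N) g
    rw [hk] at hdvd
    obtain ⟨i, -, hi⟩ := (Nat.dvd_prime_pow hq).mp hdvd
    exact ⟨i, hi⟩

end Quotient

end

theorem stmt6_general {G : Type*} [Group G] (π : Set ℕ) (q : ℕ)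
    (hq : q.Prime) (hqπ : q ∈ π) (N : Subgroup G) [N.Normal]
    (hN : N ≤ Subgroup.center G) (hcard : Nat.card N = q) :
    Nat.card {g : G // IsPiElement π g ∧
        ∃ k : ℕ, (Subgroup.centralizer {g}).index = q ^ k}
      = q * Nat.card {x : G ⧸ N // IsPiElement π x ∧
        ∃ k : ℕ, (Subgroup.centralizer {x}).index = q ^ k} := by
  have hNπ : ∀ p : ℕ, p.Prime → p ∣ Nat.card N → p ∈ π := fun p hp hdvd => by
    rwa [(Nat.prime_dvd_prime_iff_eq hp hq).mp (hcard ▸ hdvd)]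
  have hpullback (g : G) :
      (IsPiElement π g ∧ ∃ k : ℕ, (centralizer {g}).index = q ^ k) ↔
        IsPiElement π (g : G ⧸ N) ∧ ∃ k : ℕ, (centralizer {(g : G ⧸ N)}).index = q ^ k :=
    and_congr (isPiElement_mk_iff N hNπ g).symm
      (exists_index_centralizer_mk_eq_pow_iff hq hN (by rw [hcard, pow_one]) g).symm
  rw [Nat.card_congr (Equiv.subtypeEquivRight hpullback),
    card_subtype_mk N fun x => IsPiElement π x ∧ ∃ k : ℕ, (centralizer {x}).index = q ^ k, hcard]

/-- If `N ≤ Z(G)` has prime order `q ∈ π`, then `|S_q(G_π)| = q · |S_q((G/N)_π)|`. -/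
theorem stmt6 {G : Type*} [Group G] [Finite G] (π : Set ℕ) (q : ℕ)
    (hq : q.Prime) (hqπ : q ∈ π) (N : Subgroup G) [N.Normal]
    (hN : N ≤ Subgroup.center G) (hcard : Nat.card N = q) :
    Nat.card {g : G // IsPiElement π g ∧
        ∃ k : ℕ, (Subgroup.centralizer {g}).index = q ^ k}
      = q * Nat.card {x : G ⧸ N // IsPiElement π x ∧
        ∃ k : ℕ, (Subgroup.centralizer {x}).index = q ^ k} :=
  stmt6_general π q hq hqπ N hN hcard
end

section
/- Let G be a finite group and q a prime. G has a central Sylow q-subgroup as a direct factor (equivalently, a Sylow q-subgroup of G is contained in Z_∞(G)) if and only if the number of q-elements of G whose conjugacy class size is a power of q has q-part equal to |G|_q. -/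
/-!
Induction on `|G|`. If `Z(G)` contains a nontrivial `q`-element `g`, pass to `G / ⟨g⟩`. A Sylow
`q`-subgroup lies in the hypercentre of `G` iff its image lies in that of `G / ⟨g⟩`, since a
central quotient shifts the upper central series by one. The set `S` of `q`-elements with
`q`-power class size is the full preimage of the corresponding set of `G / ⟨g⟩`: for a central
`q`-subgroup `Z`, `h ↦ ⁅h, g⁆` is a homomorphism from the preimage of `C_{G/Z}(gZ)` to `Z` with
kernel `C_G(g)`, so the two class sizes differ by a power of `q`. Hence `|S|` and `|G|` both get
multiplied by `|⟨g⟩|`.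

Otherwise both sides say `q ∤ |G|`. A Sylow `q`-subgroup inside some `Z_n(G)` is normal (it is
Sylow in the nilpotent group `Z_n(G)`; Frattini), hence meets `Z(G)` nontrivially. And a Sylow
`q`-subgroup acting on `S` by conjugation fixes only central elements, because a fixed point has
class size a power of `q` dividing the index of the Sylow subgroup; so `|S| ≡ 1 [MOD q]`.
-/

open scoped commutatorElement

section PowerClass

open Subgroup

/-- `S_p(G_{p})` in the paper's notation. -/
def pElementsWithPPowerClass (p : ℕ) (G : Type*) [Group G] : Set G :=
  {g | (∃ m : ℕ, orderOf g = p ^ m) ∧ ∃ k : ℕ, (centralizer {g}).index = p ^ k}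

variable {G : Type*} [Group G] {p : ℕ}

theorem one_mem_pElementsWithPPowerClass : (1 : G) ∈ pElementsWithPPowerClass p G :=
  ⟨⟨0, by simp⟩, ⟨0, by simp⟩⟩

theorem index_centralizer_eq_index_stabilizer (g : G) :
    (centralizer {g}).index = (MulAction.stabilizer (ConjAct G) g).index := by
  rw [centralizer_eq_comap_stabilizer]
  exact index_comap_of_surjective _ ConjAct.toConjAct.surjective

theorem index_centralizer_smul (c : ConjAct G) (g : G) :
    (centralizer {c • g}).index = (centralizer {g}).index := by
  rw [index_centralizer_eq_index_stabilizer, index_centralizer_eq_index_stabilizer,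
    MulAction.index_stabilizer, MulAction.index_stabilizer, MulAction.orbit_smul]

theorem smul_mem_pElementsWithPPowerClass (c : ConjAct G) {g : G}
    (hg : g ∈ pElementsWithPPowerClass p G) : c • g ∈ pElementsWithPPowerClass p G := by
  obtain ⟨hord, hidx⟩ := hg
  exact ⟨MulEquiv.orderOf_eq (MulDistribMulAction.toMulEquiv G c) g ▸ hord,
    index_centralizer_smul c g ▸ hidx⟩

theorem mem_center_of_sylow_le_centralizer [Finite G] [Fact p.Prime] {g : G}
    (hg : g ∈ pElementsWithPPowerClass p G) (P : Sylow p G)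
    (hP : (P : Subgroup G) ≤ centralizer {g}) : g ∈ center G := by
  obtain ⟨k, hk⟩ := hg.2
  have hk0 : k = 0 := by
    by_contra hk0
    exact P.not_dvd_index ((dvd_pow_self p hk0).trans (hk ▸ index_dvd_of_le hP))
  rw [hk0, pow_zero, index_eq_one, centralizer_eq_top_iff_subset] at hk
  exact hk rfl

theorem exists_ne_one_mem_center_of_dvd_card [Finite G] [Fact p.Prime]
    (h : p ∣ Nat.card (pElementsWithPPowerClass p G)) :
    ∃ g ∈ pElementsWithPPowerClass p G, g ≠ 1 ∧ g ∈ center G := by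
  obtain ⟨P⟩ : Nonempty (Sylow p G) := inferInstance
  let A : SubMulAction (ConjAct G) G :=
    ⟨pElementsWithPPowerClass p G, fun c _ hg => smul_mem_pElementsWithPPowerClass c hg⟩
  set P' : Subgroup (ConjAct G) := (P : Subgroup G).map ConjAct.toConjAct.toMonoidHom
  have hcong := (P.isPGroup'.map _ : IsPGroup p P').card_modEq_card_fixedPoints A
  have hfix : p ∣ Nat.card (MulAction.fixedPoints P' A) :=
    Nat.modEq_zero_iff_dvd.mp (hcong.symm.trans (Nat.modEq_zero_iff_dvd.mpr h))
  let one : MulAction.fixedPoints P' A :=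
    ⟨⟨1, one_mem_pElementsWithPPowerClass⟩, fun c => by ext; simp⟩
  have htwo : 1 < Nat.card (MulAction.fixedPoints P' A) :=
    (Fact.out : p.Prime).one_lt.trans_le
      (Nat.le_of_dvd (Nat.card_pos_iff.mpr ⟨⟨one⟩, inferInstance⟩) hfix)
  have := Finite.one_lt_card_iff_nontrivial.mp htwo
  obtain ⟨⟨⟨x, hx⟩, hxfix⟩, hne⟩ := exists_ne one
  refine ⟨x, hx, fun h1 => hne (by ext; exact h1), mem_center_of_sylow_le_centralizer hx P ?_⟩
  intro g hg
  have hgx : ConjAct.toConjAct g • x = x :=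
    congrArg Subtype.val (hxfix ⟨_, mem_map_of_mem _ hg⟩)
  rw [ConjAct.toConjAct_smul] at hgx
  exact mem_centralizer_singleton_iff.mpr (mul_inv_eq_iff_eq_mul.mp hgx)

end PowerClass

section CentralQuotient

open Subgroup

theorem Subgroup.normal_of_le_center {G : Type*} [Group G] {H : Subgroup G} (h : H ≤ center G) :
    H.Normal :=
  ⟨fun n hn g => by rwa [mem_center_iff.mp (h hn) g, mul_inv_cancel_right]⟩

variable {G : Type*} [Group G] {p : ℕ} (Z : Subgroup G) [Z.Normal]

theorem exists_orderOf_mk_eq_pow_iff [Fact p.Prime] (hZ : IsPGroup p Z) (g : G) :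
    (∃ m, orderOf (g : G ⧸ Z) = p ^ m) ↔ ∃ m, orderOf g = p ^ m := by
  simp only [exists_orderOf_eq_prime_pow_iff]
  constructor
  · rintro ⟨m, hm⟩
    have hmem : g ^ p ^ m ∈ Z := by rwa [← QuotientGroup.eq_one_iff, QuotientGroup.mk_pow]
    obtain ⟨k, hk⟩ := hZ ⟨_, hmem⟩
    exact ⟨m + k, by rw [pow_add, pow_mul]; exact congrArg Subtype.val hk⟩
  · rintro ⟨m, hm⟩
    exact ⟨m, by rw [← QuotientGroup.mk_pow, hm, QuotientGroup.mk_one]⟩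

theorem relIndex_centralizer_dvd_card (hZc : Z ≤ center G) (g : G) :
    (centralizer {g}).relIndex ((centralizer {(g : G ⧸ Z)}).comap (QuotientGroup.mk' Z)) ∣
      Nat.card Z := by
  set H := (centralizer {(g : G ⧸ Z)}).comap (QuotientGroup.mk' Z)
  have hcomm : ∀ h : H, ⁅(h : G), g⁆ ∈ Z := by
    intro h
    have hh : (h : G ⧸ Z) * g = g * h := mem_centralizer_singleton_iff.mp h.2
    rw [← QuotientGroup.eq_one_iff, commutatorElement_def]
    simp only [QuotientGroup.mk_mul, QuotientGroup.mk_inv, hh]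
    group
  have hcentral : ∀ (h : H) (x : G), x * ⁅(h : G), g⁆ = ⁅(h : G), g⁆ * x :=
    fun h => mem_center_iff.mp (hZc (hcomm h))
  let f : H →* Z := MonoidHom.mk' (fun h => ⟨⁅(h : G), g⁆, hcomm h⟩) fun a b => by
    ext
    calc ⁅(a : G) * b, g⁆ = (a : G) * ⁅(b : G), g⁆ * g * (a : G)⁻¹ * g⁻¹ := by
          simp only [commutatorElement_def]; group
      _ = ⁅(b : G), g⁆ * ⁅(a : G), g⁆ := by
          rw [hcentral b a, commutatorElement_def (a : G)]; group
      _ = ⁅(a : G), g⁆ * ⁅(b : G), g⁆ := (hcentral b _).symm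
  have hker : f.ker = (centralizer {g}).subgroupOf H := by
    ext h
    simp [f, mem_subgroupOf, mem_centralizer_singleton_iff, commutatorElement_eq_one_iff_mul_comm]
  rw [relIndex, ← hker, index_ker]
  exact card_subgroup_dvd_card f.range

theorem exists_index_centralizer_mk_eq_pow_iff_s10 [Finite G] [Fact p.Prime] (hZc : Z ≤ center G)
    (hZ : IsPGroup p Z) (g : G) :
    (∃ k, (centralizer {(g : G ⧸ Z)}).index = p ^ k) ↔
      ∃ k, (centralizer {g}).index = p ^ k := by
  have hle : centralizer {g} ≤ (centralizer {(g : G ⧸ Z)}).comap (QuotientGroup.mk' Z) :=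
    fun c hc => by
      rw [mem_comap, mem_centralizer_singleton_iff, QuotientGroup.mk'_apply,
        ← QuotientGroup.mk_mul, ← QuotientGroup.mk_mul, mem_centralizer_singleton_iff.mp hc]
  have hidx := relIndex_mul_index hle
  rw [index_comap_of_surjective _ (QuotientGroup.mk'_surjective Z)] at hidx
  obtain ⟨n, hn⟩ := hZ.exists_card_eq
  obtain ⟨j, -, hj⟩ :=
    (Nat.dvd_prime_pow Fact.out).mp (hn ▸ relIndex_centralizer_dvd_card Z hZc g)
  rw [← hidx, hj]
  constructor
  · rintro ⟨k, hk⟩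
    exact ⟨j + k, by rw [hk, pow_add]⟩
  · rintro ⟨k, hk⟩
    obtain ⟨i, -, hi⟩ := (Nat.dvd_prime_pow Fact.out).mp (Dvd.intro_left _ hk)
    exact ⟨i, hi⟩

theorem preimage_mk_pElementsWithPPowerClass [Finite G] [Fact p.Prime] (hZc : Z ≤ center G)
    (hZ : IsPGroup p Z) :
    QuotientGroup.mk ⁻¹' pElementsWithPPowerClass p (G ⧸ Z) =
      pElementsWithPPowerClass p G := by
  ext g
  exact and_congr (exists_orderOf_mk_eq_pow_iff Z hZ g)
    (exists_index_centralizer_mk_eq_pow_iff_s10 Z hZc hZ g)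

theorem factorization_card_pElementsWithPPowerClass_eq_iff [Finite G] [Fact p.Prime]
    (hZc : Z ≤ center G) (hZ : IsPGroup p Z) :
    (Nat.card (pElementsWithPPowerClass p G)).factorization p = (Nat.card G).factorization p ↔
      (Nat.card (pElementsWithPPowerClass p (G ⧸ Z))).factorization p =
        (Nat.card (G ⧸ Z)).factorization p := by
  have hS : Nat.card (pElementsWithPPowerClass p (G ⧸ Z)) ≠ 0 :=
    Nat.card_ne_zero.mpr ⟨⟨⟨1, one_mem_pElementsWithPPowerClass⟩⟩, inferInstance⟩
  rw [← preimage_mk_pElementsWithPPowerClass Z hZc hZ, QuotientGroup.card_preimage_mk,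
    card_eq_card_quotient_mul_card_subgroup Z, mul_comm (Nat.card (G ⧸ Z)),
    Nat.factorization_mul Nat.card_pos.ne' hS,
    Nat.factorization_mul Nat.card_pos.ne' Nat.card_pos.ne', Finsupp.add_apply,
    Finsupp.add_apply, add_right_inj]

end CentralQuotient

section Hypercenter

open Subgroup

variable {G : Type*} [Group G]

theorem exists_le_upperCentralSeries_of_le_iSup [Finite G] {H : Subgroup G}
    (h : H ≤ ⨆ n, Subgroup.upperCentralSeries G n) :
    ∃ n, H ≤ Subgroup.upperCentralSeries G n := by
  have hH : IsCompactElement H :=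
    (CompleteLattice.isSupFiniteCompact_iff_all_elements_compact _).mp
      (CompleteLattice.WellFoundedGT.isSupFiniteCompact _) H
  obtain ⟨_, ⟨n, rfl⟩, hn⟩ := hH _ _ (Set.range_nonempty _)
    (directedOn_range.mpr (Subgroup.upperCentralSeries_mono G).directed_le) isLUB_iSup h
  exact ⟨n, hn⟩

theorem isNilpotent_upperCentralSeries (n : ℕ) :
    Group.IsNilpotent (Subgroup.upperCentralSeries G n) := by
  rw [Subgroup.nilpotent_iff_finite_ascending_central_series]
  refine ⟨n, fun i => (Subgroup.upperCentralSeries G i).subgroupOf _, ⟨?_, ?_⟩,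
    subgroupOf_self _⟩
  · simp [Subgroup.upperCentralSeries_zero]
  · intro x i hx g
    exact Subgroup.mem_upperCentralSeries_succ_iff.mp hx g

theorem Sylow.normal_of_le_upperCentralSeries [Finite G] {p : ℕ} [Fact p.Prime] (P : Sylow p G)
    {n : ℕ} (h : (P : Subgroup G) ≤ Subgroup.upperCentralSeries G n) :
    (P : Subgroup G).Normal := by
  have : ((P : Subgroup G).subgroupOf (Subgroup.upperCentralSeries G n)).Normal := by
    have := isNilpotent_upperCentralSeries (G := G) n
    rw [← P.coe_subtype h]
    infer_instance
  rw [← normalizer_eq_top_iff, ← P.normalizer_sup_eq_top' h]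
  exact (sup_of_le_left (le_normalizer_of_normal_subgroupOf h)).symm

theorem Subgroup.Normal.inf_center_ne_bot_of_le_upperCentralSeries {N : Subgroup G} [N.Normal]
    {n : ℕ} (hN : N ≤ Subgroup.upperCentralSeries G n) (hN1 : N ≠ ⊥) : N ⊓ center G ≠ ⊥ := by
  induction n generalizing N with
  | zero => exact absurd (le_bot_iff.mp hN) hN1
  | succ n ih =>
    by_cases h : N ⊓ Subgroup.upperCentralSeries G n = ⊥
    · have hcomm : ⁅N, ⊤⁆ = ⊥ := le_bot_iff.mp <| h ▸ le_inf (commutator_le_left N ⊤)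
        ((commutator_mono hN le_rfl).trans (commutator_upperCentralSeries_top_le G n))
      have hNc : N ≤ center G := by
        rwa [commutator_eq_bot_iff_le_centralizer, coe_top, centralizer_univ] at hcomm
      rwa [inf_of_le_left hNc]
    · exact ne_bot_of_le_ne_bot (ih inf_le_right h) (inf_le_inf_right _ inf_le_left)

theorem comap_upperCentralSeries_quotient_le {Z : Subgroup G} [Z.Normal] (hZ : Z ≤ center G)
    (n : ℕ) :
    (Subgroup.upperCentralSeries (G ⧸ Z) n).comap (QuotientGroup.mk' Z) ≤
      Subgroup.upperCentralSeries G (n + 1) := by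
  induction n with
  | zero =>
    rwa [Subgroup.upperCentralSeries_zero, MonoidHom.comap_bot, QuotientGroup.ker_mk', zero_add,
      Subgroup.upperCentralSeries_one]
  | succ n ih =>
    intro g hg y
    exact ih (by simpa using Subgroup.mem_upperCentralSeries_succ_iff.mp hg (y : G ⧸ Z))

theorem exists_sylow_le_iSup_upperCentralSeries_quotient_iff [Finite G] {p : ℕ} [Fact p.Prime]
    (Z : Subgroup G) [Z.Normal] (hZ : Z ≤ center G) :
    (∃ P : Sylow p G, (P : Subgroup G) ≤ ⨆ n, Subgroup.upperCentralSeries G n) ↔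
      ∃ Q : Sylow p (G ⧸ Z),
        (Q : Subgroup (G ⧸ Z)) ≤ ⨆ n, Subgroup.upperCentralSeries (G ⧸ Z) n := by
  constructor
  · rintro ⟨P, hP⟩
    obtain ⟨n, hn⟩ := exists_le_upperCentralSeries_of_le_iSup hP
    refine ⟨P.mapSurjective (QuotientGroup.mk'_surjective Z), ?_⟩
    rw [Sylow.coe_mapSurjective]
    exact ((map_mono hn).trans
      (Subgroup.upperCentralSeries.map (QuotientGroup.mk'_surjective Z) n)).trans (le_iSup _ n)
  · rintro ⟨Q, hQ⟩
    obtain ⟨n, hn⟩ := exists_le_upperCentralSeries_of_le_iSup hQ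
    obtain ⟨P, rfl⟩ := Sylow.mapSurjective_surjective (QuotientGroup.mk'_surjective Z) p Q
    rw [Sylow.coe_mapSurjective] at hn
    exact ⟨P, fun g hg => le_iSup (Subgroup.upperCentralSeries G) (n + 1)
      (comap_upperCentralSeries_quotient_le hZ n (hn (mem_map_of_mem _ hg)))⟩

end Hypercenter

section NoCentralPElements

open Subgroup

variable {G : Type*} [Group G] [Finite G] {p : ℕ} [Fact p.Prime]

theorem exists_sylow_le_iSup_upperCentralSeries_iff_not_dvd
    (hcen : ∀ g ∈ center G, (∃ m, orderOf g = p ^ m) → g = 1) :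
    (∃ P : Sylow p G, (P : Subgroup G) ≤ ⨆ n, Subgroup.upperCentralSeries G n) ↔
      ¬ p ∣ Nat.card G := by
  constructor
  · rintro ⟨P, hP⟩ hdvd
    obtain ⟨n, hn⟩ := exists_le_upperCentralSeries_of_le_iSup hP
    have := P.normal_of_le_upperCentralSeries hn
    obtain ⟨⟨g, hgP, hgc⟩, hg1⟩ :=
      ne_bot_iff_exists_ne_one.mp
        (Normal.inf_center_ne_bot_of_le_upperCentralSeries hn (P.ne_bot_of_dvd_card hdvd))
    have hgp : ∃ m, orderOf g = p ^ m := by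
      simpa using IsPGroup.iff_orderOf.mp P.isPGroup' ⟨g, hgP⟩
    exact hg1 (Subtype.ext (hcen g hgc hgp))
  · intro hndvd
    obtain ⟨P⟩ : Nonempty (Sylow p G) := inferInstance
    have hP : Nat.card P = 1 := by
      rw [P.card_eq_multiplicity, Nat.factorization_eq_zero_of_not_dvd hndvd, pow_zero]
    exact ⟨P, (eq_bot_of_card_eq _ hP).trans_le bot_le⟩

theorem factorization_card_pElementsWithPPowerClass_eq_iff_not_dvd
    (hcen : ∀ g ∈ center G, (∃ m, orderOf g = p ^ m) → g = 1) :
    (Nat.card (pElementsWithPPowerClass p G)).factorization p = (Nat.card G).factorization p ↔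
      ¬ p ∣ Nat.card G := by
  have hS : ¬ p ∣ Nat.card (pElementsWithPPowerClass p G) := fun h => by
    obtain ⟨g, hg, hg1, hgc⟩ := exists_ne_one_mem_center_of_dvd_card h
    exact hg1 (hcen g hgc hg.1)
  rw [Nat.factorization_eq_zero_of_not_dvd hS,
    (Fact.out : p.Prime).dvd_iff_one_le_factorization Nat.card_pos.ne']
  omega

end NoCentralPElements

/-- `G` is q-decomposable (a Sylow q-subgroup lies in the hypercentre) iff the q-part of
the number of q-elements of `G` whose class size is a power of `q` equals `|G|_q`. -/
theorem stmt10 {G : Type*} [Group G] [Finite G] (q : ℕ) [Fact q.Prime] :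
    (∃ Q : Sylow q G, (Q : Subgroup G) ≤ ⨆ n : ℕ, upperCentralSeries G n) ↔
      (Nat.card {g : G // (∃ m : ℕ, orderOf g = q ^ m) ∧
          ∃ k : ℕ, (Subgroup.centralizer {g}).index = q ^ k}).factorization q
        = (Nat.card G).factorization q := by
  change (∃ Q : Sylow q G, (Q : Subgroup G) ≤ ⨆ n, Subgroup.upperCentralSeries G n) ↔
    (Nat.card (pElementsWithPPowerClass q G)).factorization q = _
  obtain ⟨n, hn⟩ : ∃ n, Nat.card G = n := ⟨_, rfl⟩
  induction n using Nat.strong_induction_on generalizing G with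
  | _ n ih =>
  by_cases hcen : ∀ g ∈ Subgroup.center G, (∃ m, orderOf g = q ^ m) → g = 1
  · rw [exists_sylow_le_iSup_upperCentralSeries_iff_not_dvd hcen,
      factorization_card_pElementsWithPPowerClass_eq_iff_not_dvd hcen]
  push Not at hcen
  obtain ⟨g, hgc, ⟨m, hgm⟩, hg1⟩ := hcen
  set Z := Subgroup.zpowers g
  have hZc : Z ≤ Subgroup.center G := Subgroup.zpowers_le.mpr hgc
  have := Subgroup.normal_of_le_center hZc
  have hZ : IsPGroup q Z := IsPGroup.of_card (by rw [Nat.card_zpowers, hgm])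
  have hlt : Nat.card (G ⧸ Z) < Nat.card G := by
    rw [Subgroup.card_eq_card_quotient_mul_card_subgroup Z]
    exact lt_mul_of_one_lt_right Nat.card_pos
      ((Subgroup.one_lt_card_iff_ne_bot _).mpr (Subgroup.zpowers_ne_bot.mpr hg1))
  rw [exists_sylow_le_iSup_upperCentralSeries_quotient_iff _ hZc,
    factorization_card_pElementsWithPPowerClass_eq_iff _ hZc hZ]
  exact ih _ (hn ▸ hlt) rfl
end

section
/- Let G be a finite group, π a set of primes, and q ∈ π. Let S_{q'}(G_π) denote the set of π-elements of G whose conjugacy class size is not divisible by q. Then S_{q'}(G_π) is a union of cosets of Z := Z(G) ∩ Q, where Q is a Sylow q-subgroup of G; in particular |Z(G)|_q divides |S_{q'}(G_π)|. -/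
namespace IsPiElement

variable {G : Type*} [Group G] {π : Set ℕ}

theorem mul_of_commute_s14 {g h : G} (hgh : Commute g h) (hg : IsPiElement π g)
    (hh : IsPiElement π h) : IsPiElement π (g * h) := fun p hp hpd =>
  (hp.dvd_mul.mp (hpd.trans hgh.orderOf_mul_dvd_mul_orderOf)).elim (hg p hp) (hh p hp)

theorem of_isPGroup {q : ℕ} [Fact q.Prime] (hq : q ∈ π) {H : Subgroup G} (hH : IsPGroup q H)
    {g : G} (hg : g ∈ H) : IsPiElement π g := by
  intro p hp hpd
  obtain ⟨k, hk⟩ := IsPGroup.iff_orderOf.mp hH ⟨g, hg⟩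
  rw [Subgroup.orderOf_mk] at hk
  rw [hk] at hpd
  rwa [(Nat.prime_dvd_prime_iff_eq hp Fact.out).mp (hp.dvd_of_dvd_pow hpd)]

end IsPiElement

namespace Subgroup

variable {G : Type*} [Group G]

theorem centralizer_singleton_mul_of_mem_center_s14 {g z : G} (hz : z ∈ center G) :
    centralizer {g * z} = centralizer {g} := by
  ext x
  have hxz : x * z = z * x := mem_center_iff.mp hz x
  simp only [mem_centralizer_singleton_iff]
  constructor
  · intro h
    apply mul_right_cancel (b := z)
    rw [mul_assoc, h, mul_assoc, mul_assoc, hxz]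
  · intro h
    rw [← mul_assoc, h, mul_assoc, hxz, ← mul_assoc]

theorem normal_of_le_center_s14 {H : Subgroup G} (hH : H ≤ center G) : H.Normal where
  conj_mem n hn g := by
    rwa [mem_center_iff.mp (hH hn) g, mul_inv_cancel_right]

theorem card_dvd_card_of_mul_mem {H : Subgroup G} {S : Set G}
    (hS : ∀ g ∈ S, ∀ h ∈ H, g * h ∈ S) : Nat.card H ∣ Nat.card S := by
  have hpre : (QuotientGroup.mk : G → G ⧸ H) ⁻¹' (QuotientGroup.mk '' S) = S := by
    refine Set.Subset.antisymm ?_ (Set.subset_preimage_image _ _)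
    rintro x ⟨g, hg, hgx⟩
    simpa using hS g hg _ (QuotientGroup.eq.mp hgx)
  rw [← hpre, QuotientGroup.card_preimage_mk]
  exact dvd_mul_right _ _

end Subgroup

open Subgroup

theorem Sylow.pow_factorization_card_center_dvd_card_center_inf {G : Type*} [Group G] [Finite G]
    {q : ℕ} [Fact q.Prime] (Q : Sylow q G) :
    q ^ (Nat.card (center G)).factorization q ∣ Nat.card (center G ⊓ Q : Subgroup G) := by
  obtain ⟨R⟩ : Nonempty (Sylow q (center G)) := inferInstance
  let R' : Subgroup G := (R : Subgroup (center G)).map (center G).subtype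
  have hR'center : R' ≤ center G := map_subtype_le _
  have : R'.Normal := normal_of_le_center_s14 hR'center
  have hR'Q : R' ≤ Q := (R.isPGroup'.map _).le_sylow_of_normal Q
  rw [← R.card_eq_multiplicity, ← card_map_of_injective (center G).subtype_injective]
  exact card_dvd_of_le (le_inf hR'center hR'Q)

/-- `S_{q'}(G_π)` is a union of cosets of `Z = Z(G) ⊓ Q`; in particular `|Z(G)|_q`
divides `|S_{q'}(G_π)|`. -/
theorem stmt14 {G : Type*} [Group G] [Finite G] (π : Set ℕ) (q : ℕ)
    [Fact q.Prime] (hqπ : q ∈ π) (Q : Sylow q G) :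
    (∀ g : G, (IsPiElement π g ∧ ¬ q ∣ (Subgroup.centralizer {g}).index) →
      ∀ z ∈ Subgroup.center G ⊓ (Q : Subgroup G),
        IsPiElement π (g * z) ∧ ¬ q ∣ (Subgroup.centralizer {g * z}).index) ∧
    q ^ ((Nat.card (Subgroup.center G)).factorization q) ∣
      Nat.card {g : G // IsPiElement π g ∧ ¬ q ∣ (Subgroup.centralizer {g}).index} := by
  have hcoset : ∀ g : G, (IsPiElement π g ∧ ¬ q ∣ (centralizer {g}).index) →
      ∀ z ∈ center G ⊓ (Q : Subgroup G),
        IsPiElement π (g * z) ∧ ¬ q ∣ (centralizer {g * z}).index := by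
    rintro g ⟨hπg, hqg⟩ z ⟨hzc, hzQ⟩
    refine ⟨hπg.mul_of_commute_s14 (mem_center_iff.mp hzc g) (.of_isPGroup hqπ Q.isPGroup' hzQ), ?_⟩
    rwa [centralizer_singleton_mul_of_mem_center_s14 hzc]
  exact ⟨hcoset, Q.pow_factorization_card_center_dvd_card_center_inf.trans
    (card_dvd_card_of_mul_mem (S := {g | _}) hcoset)⟩
end

section
/- Let G be a finite group, π a set of primes, q ∈ π, and Z = Z(G) ∩ Q for Q a Sylow q-subgroup. If g is a π-element of G whose conjugacy class size is not divisible by q, then the centralizer of gZ in G/Z equals C_G(g)/Z, i.e., the preimage of C_{G/Z}(gZ) in G is exactly C_G(g). -/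
open scoped commutatorElement

namespace Subgroup

variable {G : Type*} [Group G] {N : Subgroup G} [N.Normal] (g : G)

theorem mem_comap_centralizer_mk_iff {x : G} :
    x ∈ (centralizer {(g : G ⧸ N)}).comap (QuotientGroup.mk' N) ↔ ⁅g, x⁆ ∈ N := by
  rw [mem_comap, mem_centralizer_singleton_iff, ← QuotientGroup.eq_one_iff,
    QuotientGroup.mk'_apply, eq_comm, ← commutatorElement_eq_one_iff_mul_comm]
  rfl

theorem centralizer_le_comap_centralizer_mk :
    centralizer {g} ≤ (centralizer {(g : G ⧸ N)}).comap (QuotientGroup.mk' N) := by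
  intro x hx
  rw [mem_comap_centralizer_mk_iff, commutatorElement_eq_one_iff_mul_comm.mpr
    (mem_centralizer_singleton_iff.mp hx).symm]
  exact N.one_mem

variable {g} (hN : N ≤ center G)
include hN

def commutatorHom : (centralizer {(g : G ⧸ N)}).comap (QuotientGroup.mk' N) →* N where
  toFun x := ⟨⁅g, x⁆, (mem_comap_centralizer_mk_iff g).mp x.2⟩
  map_one' := by ext; simp
  map_mul' x y := by
    have hy : ⁅g, (y : G)⁆ ∈ center G := hN ((mem_comap_centralizer_mk_iff g).mp y.2)
    ext
    change ⁅g, (x : G) * y⁆ = ⁅g, (x : G)⁆ * ⁅g, (y : G)⁆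
    rw [commutatorElement_mul_right_eq_mul_conj, mul_assoc _ (x : G),
      mem_center_iff.mp hy, ← mul_assoc, mul_inv_cancel_right]

theorem ker_commutatorHom :
    (commutatorHom hN).ker = (centralizer {g}).subgroupOf
      ((centralizer {(g : G ⧸ N)}).comap (QuotientGroup.mk' N)) := by
  ext x
  rw [MonoidHom.mem_ker, mem_subgroupOf, mem_centralizer_singleton_iff, Subtype.ext_iff,
    eq_comm (a := (x : G) * g)]
  exact commutatorElement_eq_one_iff_mul_comm

theorem relIndex_centralizer_comap_centralizer_mk_dvd_card :
    (centralizer {g}).relIndex ((centralizer {(g : G ⧸ N)}).comap (QuotientGroup.mk' N))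
      ∣ Nat.card N := by
  rw [relIndex, ← ker_commutatorHom hN, index_ker]
  exact card_subgroup_dvd_card _

end Subgroup

theorem stmt15_general {G : Type*} [Group G] [Finite G] (q : ℕ)
    [Fact q.Prime] (Q : Sylow q G)
    (Z : Subgroup G) [Z.Normal] (hZ : Z = Subgroup.center G ⊓ (Q : Subgroup G))
    (g : G) (hcs : ¬ q ∣ (Subgroup.centralizer {g}).index) :
    Subgroup.comap (QuotientGroup.mk' Z) (Subgroup.centralizer {(g : G ⧸ Z)})
      = Subgroup.centralizer {g} := by
  set C := (Subgroup.centralizer {(g : G ⧸ Z)}).comap (QuotientGroup.mk' Z)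
  have hle : Subgroup.centralizer {g} ≤ C := Subgroup.centralizer_le_comap_centralizer_mk g
  obtain ⟨n, hQ⟩ := IsPGroup.iff_card.mp Q.isPGroup'
  have hdvd_pow : (Subgroup.centralizer {g}).relIndex C ∣ q ^ n :=
    hQ ▸ (Subgroup.relIndex_centralizer_comap_centralizer_mk_dvd_card (hZ ▸ inf_le_left)).trans
      (Subgroup.card_dvd_of_le (hZ ▸ inf_le_right))
  have hndvd : ¬ q ∣ (Subgroup.centralizer {g}).relIndex C :=
    fun h ↦ hcs (h.trans (Dvd.intro _ (Subgroup.relIndex_mul_index hle)))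
  have hcop := ((Nat.Prime.coprime_iff_not_dvd Fact.out).mpr hndvd).symm.pow_right n
  exact le_antisymm (Subgroup.relIndex_eq_one.mp (hcop.eq_one_of_dvd hdvd_pow)) hle

/-- For `Z = Z(G) ⊓ Q` and a π-element `g` with class size prime to `q`, the preimage in
`G` of `C_{G/Z}(gZ)` is exactly `C_G(g)`. -/
theorem stmt15 {G : Type*} [Group G] [Finite G] (π : Set ℕ) (q : ℕ)
    [Fact q.Prime] (hqπ : q ∈ π) (Q : Sylow q G)
    (Z : Subgroup G) [Z.Normal] (hZ : Z = Subgroup.center G ⊓ (Q : Subgroup G))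
    (g : G) (hg : IsPiElement π g) (hcs : ¬ q ∣ (Subgroup.centralizer {g}).index) :
    Subgroup.comap (QuotientGroup.mk' Z) (Subgroup.centralizer {(g : G ⧸ Z)})
      = Subgroup.centralizer {g} :=
  stmt15_general q Q Z hZ g hcs
end

section
/- Let G be a finite group, π a set of primes, q ∈ π, and Q a Sylow q-subgroup of G. If Z(Q) ≤ Z(G) and C_G(Q) has a normal Hall π-subgroup, then the q-part of |S_{q'}(G_π)| equals |Z(G)|_q. -/
/-!
Let `S` be the set of π-elements whose class size is prime to `q`. Each `g ∈ S` is the product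
of its `q`-part and its `q'`-part, both powers of `g` and hence again in `S`. A `q`-element of `S`
has a Sylow `q`-subgroup `P` in its centralizer, so it lies in `Z(P)`, which is conjugate to
`Z(Q) ≤ Z(G)`. Hence `(a, t) ↦ a t` identifies `S` with the product of the `q`-part of `Z(G)`
and the set `T` of `q'`-elements of `S`, and it remains to see that `q ∤ |T|`.

Counting orbits of `Q` acting by conjugation, `|T| ≡ |T ∩ C_G(Q)| (mod q)`, and `T ∩ C_G(Q)` is
the set of `q'`-elements of the normal Hall π-subgroup of `C_G(Q)`. The number of `q'`-elements
of any finite group `H` is prime to `q`: by the same orbit count it is congruent to the number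
of `q'`-elements of `C_H(P)`, `P ∈ Syl_q(H)`, and in `C_H(P)` all `q`-elements are central, so
the factorisation above splits off a full Sylow `q`-subgroup.
-/

open Subgroup

namespace IsPiElement

variable {G : Type*} [Group G] {π π' : Set ℕ} {x y : G}

theorem mono (h : IsPiElement π x) (hππ' : π ⊆ π') : IsPiElement π' x :=
  fun p hp hpx => hππ' (h p hp hpx)

theorem of_orderOf_dvd {H : Type*} [Group H] {y : H} (h : IsPiElement π x)
    (hyx : orderOf y ∣ orderOf x) : IsPiElement π y :=
  fun p hp hpy => h p hp (hpy.trans hyx)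

theorem of_mem_zpowers (h : IsPiElement π x) (hy : y ∈ zpowers x) : IsPiElement π y :=
  h.of_orderOf_dvd (orderOf_dvd_of_mem_zpowers hy)

theorem inv (h : IsPiElement π x) : IsPiElement π x⁻¹ :=
  h.of_orderOf_dvd (orderOf_inv x).dvd

theorem mul (hx : IsPiElement π x) (hy : IsPiElement π y) (hxy : Commute x y) :
    IsPiElement π (x * y) := fun p hp hpxy =>
  (hp.dvd_mul.mp (hpxy.trans hxy.orderOf_mul_dvd_mul_orderOf)).elim (hx p hp) (hy p hp)

theorem conj (h : IsPiElement π x) (u : G) : IsPiElement π (u * x * u⁻¹) :=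
  h.of_orderOf_dvd (by rw [← MulAut.conj_apply, MulEquiv.orderOf_eq])

theorem eq_one_of_compl (h : IsPiElement π x) (h' : IsPiElement πᶜ x) : x = 1 := by
  by_contra hx
  obtain ⟨p, hp, hpx⟩ := Nat.exists_prime_and_dvd (mt orderOf_eq_one_iff.mp hx)
  exact h' p hp hpx (h p hp hpx)

theorem of_orderOf_dvd_pow {q n : ℕ} (hq : q.Prime) (h : orderOf x ∣ q ^ n) :
    IsPiElement {q} x := fun _ hp hpx =>
  (Nat.prime_dvd_prime_iff_eq hp hq).mp (hp.dvd_of_dvd_pow (hpx.trans h))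

theorem of_mem_isPGroup {q : ℕ} [Fact q.Prime] {P : Subgroup G} (hP : IsPGroup q P)
    (hx : x ∈ P) : IsPiElement {q} x := by
  obtain ⟨k, hk⟩ := IsPGroup.iff_orderOf.mp hP ⟨x, hx⟩
  exact of_orderOf_dvd_pow Fact.out (by rw [← Subgroup.orderOf_mk x hx, hk])

theorem isPGroup_zpowers {q : ℕ} (h : IsPiElement {q} x) : IsPGroup q (zpowers x) := by
  have h0 : orderOf x ≠ 0 := fun h0 => by
    have h2 : 2 = q := h 2 Nat.prime_two (h0 ▸ dvd_zero 2)
    have h3 : 3 = q := h 3 Nat.prime_three (h0 ▸ dvd_zero 3)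
    omega
  exact IsPGroup.of_card (Nat.card_zpowers x ▸
    Nat.eq_prime_pow_of_unique_prime_dvd h0 fun hp hpx => h _ hp hpx)

end IsPiElement

theorem Subgroup.isPiElement_coe {G : Type*} [Group G] {π : Set ℕ} {H : Subgroup G} {h : H} :
    IsPiElement π (h : G) ↔ IsPiElement π h := by
  simp only [IsPiElement, Subgroup.orderOf_coe]

theorem Subgroup.card_mem_and_isPiElement {G : Type*} [Group G] (π : Set ℕ) (H : Subgroup G) :
    Nat.card {g : G // g ∈ H ∧ IsPiElement π g} = Nat.card {h : H // IsPiElement π h} :=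
  Nat.card_congr <| (Equiv.subtypeSubtypeEquivSubtypeInter (· ∈ H) (IsPiElement π)).symm.trans
    (Equiv.subtypeEquivRight fun _ => H.isPiElement_coe)

theorem Subgroup.index_centralizer_conj_dvd {G : Type*} [Group G] (u g : G) :
    (centralizer {u * g * u⁻¹}).index ∣ (centralizer {g}).index := by
  have h := map_centralizer_le_centralizer_image {g} (MulAut.conj u).toMonoidHom
  rw [Set.image_singleton] at h
  simpa [index_map_equiv] using index_dvd_of_le h

def Subgroup.IsHall {H : Type*} [Group H] (π : Set ℕ) (K : Subgroup H) : Prop :=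
  (∀ p : ℕ, p.Prime → p ∣ Nat.card K → p ∈ π) ∧ (∀ p : ℕ, p.Prime → p ∣ K.index → p ∉ π)

theorem Subgroup.IsHall.isPiElement_iff_mem {H : Type*} [Group H] {π : Set ℕ} {K : Subgroup H}
    [K.Normal] (hK : K.IsHall π) {h : H} : IsPiElement π h ↔ h ∈ K := by
  refine ⟨fun hh => ?_, fun hh p hp hph => hK.1 p hp (hph.trans (K.orderOf_dvd_natCard hh))⟩
  have hπ : IsPiElement π (h : H ⧸ K) :=
    hh.of_orderOf_dvd (orderOf_map_dvd (QuotientGroup.mk' K) h)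
  have hπ' : IsPiElement πᶜ (h : H ⧸ K) := fun p hp hph =>
    hK.2 p hp (hph.trans (_root_.orderOf_dvd_natCard _))
  exact (QuotientGroup.eq_one_iff h).mp (hπ.eq_one_of_compl hπ')

section Sylow

variable {G : Type*} [Group G] {q : ℕ}

theorem Sylow.mem_of_isPiElement_of_mem_normalizer (P : Sylow q G) {x : G}
    (hx : IsPiElement {q} x) (hxP : x ∈ normalizer (P : Set G)) : x ∈ P := by
  have hmem : x ∈ zpowers x ⊓ normalizer (P : Set G) := ⟨mem_zpowers x, hxP⟩
  rw [hx.isPGroup_zpowers.inf_normalizer_sylow] at hmem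
  exact hmem.2

variable [Fact q.Prime]

theorem Sylow.mem_iff_isPiElement (P : Sylow q G) [(P : Subgroup G).Normal] {x : G} :
    x ∈ (P : Subgroup G) ↔ IsPiElement {q} x :=
  ⟨IsPiElement.of_mem_isPGroup P.isPGroup', fun hx =>
    P.mem_of_isPiElement_of_mem_normalizer hx (by rw [← P.coe_coe, normalizer_eq_top]; trivial)⟩

variable [Finite G]

theorem Sylow.not_dvd_index_of_le (P : Sylow q G) {H : Subgroup G} (hPH : ↑P ≤ H) :
    ¬ q ∣ H.index :=
  fun h => P.not_dvd_index (h.trans (index_dvd_of_le hPH))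

theorem exists_sylow_le_of_not_dvd_index {H : Subgroup G} (hH : ¬ q ∣ H.index) :
    ∃ P : Sylow q G, ↑P ≤ H := by
  let P : Sylow q H := default
  have hindex : ¬ q ∣ ((P : Subgroup H).map H.subtype).index := by
    rw [index_map_subtype]
    exact (Fact.out : q.Prime).not_dvd_mul P.not_dvd_index hH
  exact ⟨(P.isPGroup'.map H.subtype).toSylow hindex, map_subtype_le _⟩

theorem Sylow.mem_center_of_commute {Q : Sylow q G}
    (hZQ : ∀ x ∈ (Q : Subgroup G), (∀ y ∈ (Q : Subgroup G), x * y = y * x) → x ∈ center G)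
    (P : Sylow q G) {x : G} (hx : x ∈ (P : Subgroup G))
    (hxP : ∀ y ∈ (P : Subgroup G), x * y = y * x) : x ∈ center G := by
  obtain ⟨g, rfl⟩ := MulAction.exists_smul_eq G Q P
  rw [Sylow.coe_subgroup_smul] at hx hxP
  obtain ⟨x, hxQ, rfl⟩ := mem_smul_pointwise_iff_exists _ _ _ |>.mp hx
  have hcomm : ∀ y ∈ (Q : Subgroup G), x * y = y * x := fun y hy => by
    have h := hxP _ (smul_mem_pointwise_smul _ (MulAut.conj g) _ hy)
    rw [MulAut.smul_def, MulAut.smul_def, ← map_mul, ← map_mul] at h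
    exact (MulAut.conj g).injective h
  simpa only [MulAut.smul_def, MulAut.conj_apply] using
    (inferInstance : (center G).Normal).conj_mem x (hZQ x hxQ hcomm) g

theorem mem_center_of_isPiElement_of_not_dvd_index (Q : Sylow q G)
    (hZQ : ∀ x ∈ (Q : Subgroup G), (∀ y ∈ (Q : Subgroup G), x * y = y * x) → x ∈ center G)
    {x : G} (hx : IsPiElement {q} x) (hidx : ¬ q ∣ (centralizer {x}).index) :
    x ∈ center G := by
  obtain ⟨P, hP⟩ := exists_sylow_le_of_not_dvd_index hidx
  have hcomm : ∀ y ∈ (P : Subgroup G), y * x = x * y := fun y hy =>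
    mem_centralizer_singleton_iff.mp (hP hy)
  have hxP := P.mem_of_isPiElement_of_mem_normalizer hx
    (centralizer_le_normalizer _ (mem_centralizer_iff.mpr hcomm))
  exact Sylow.mem_center_of_commute hZQ P hxP fun y hy => (hcomm y hy).symm

end Sylow

section Decomposition

variable {G : Type*} [Group G] {q : ℕ}

theorem exists_mul_eq_isPiElement_singleton_compl [hq : Fact q.Prime] {g : G}
    (hg : IsOfFinOrder g) :
    ∃ a ∈ zpowers g, ∃ b ∈ zpowers g, a * b = g ∧ IsPiElement {q} a ∧ IsPiElement {q}ᶜ b := by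
  have hn : orderOf g ≠ 0 := hg.orderOf_pos.ne'
  set m := ordProj[q] (orderOf g)
  set k := ordCompl[q] (orderOf g)
  have hmk : m * k = orderOf g := Nat.ordProj_mul_ordCompl_eq_self _ q
  have hqk : ¬ q ∣ k := Nat.not_dvd_ordCompl hq.out hn
  obtain ⟨u, v, huv⟩ : IsCoprime (m : ℤ) k :=
    Nat.isCoprime_iff_coprime.mpr ((Nat.coprime_ordCompl hq.out hn).pow_left _)
  have hpow (i : ℤ) : g ^ (i * m * k) = 1 := by
    rw [mul_assoc, ← Nat.cast_mul, hmk, mul_comm, zpow_mul, zpow_natCast, pow_orderOf_eq_one,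
      one_zpow]
  refine ⟨g ^ (v * k), zpow_mem_zpowers g _, g ^ (u * m), zpow_mem_zpowers g _, ?_, ?_, ?_⟩
  · rw [← zpow_add, add_comm, huv, zpow_one]
  · refine IsPiElement.of_orderOf_dvd_pow (n := (orderOf g).factorization q) hq.out
      (orderOf_dvd_of_pow_eq_one ?_)
    rw [← zpow_natCast, ← zpow_mul, mul_right_comm, hpow]
  · rintro p hp hpb rfl
    refine hqk (hpb.trans (orderOf_dvd_of_pow_eq_one ?_))
    rw [← zpow_natCast, ← zpow_mul, hpow]

theorem eq_and_eq_of_mul_eq_mul {a a' b b' : G} (ha : a ∈ center G) (ha' : a' ∈ center G)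
    (haq : IsPiElement {q} a) (haq' : IsPiElement {q} a') (hb : IsPiElement {q}ᶜ b)
    (hb' : IsPiElement {q}ᶜ b') (h : a * b = a' * b') : a = a' ∧ b = b' := by
  have hc : a'⁻¹ * a ∈ center G := mul_mem (inv_mem ha') ha
  have hb'c : b' = a'⁻¹ * a * b := by rw [mul_assoc, h, inv_mul_cancel_left]
  have hc1 : a'⁻¹ * a = 1 := by
    refine (haq'.inv.mul haq ((Set.mem_center_iff.mp ha').comm a).inv_left).eq_one_of_compl ?_
    have hcomm : Commute b' b⁻¹ :=
      hb'c ▸ (((Set.mem_center_iff.mp hc).comm b).mul_left (.refl b)).inv_right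
    simpa only [hb'c, mul_inv_cancel_right] using hb'.mul hb.inv hcomm
  exact ⟨(inv_mul_eq_one.mp hc1).symm, by rw [hb'c, hc1, one_mul]⟩

end Decomposition

section Counting

variable {G : Type*} [Group G] [Finite G] {q : ℕ} [hq : Fact q.Prime]

theorem card_eq_card_center_isPiElement_mul {S : Set G}
    (hzpow : ∀ g ∈ S, ∀ x ∈ zpowers g, x ∈ S)
    (hcenter : ∀ g ∈ S, IsPiElement {q} g → g ∈ center G)
    (hmul : ∀ a ∈ center G, IsPiElement {q} a → ∀ t ∈ S, a * t ∈ S) :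
    Nat.card S = Nat.card {a : G // a ∈ center G ∧ IsPiElement {q} a} *
      Nat.card ↥(S ∩ {t | IsPiElement {q}ᶜ t}) := by
  rw [← Nat.card_prod]
  refine (Nat.card_eq_of_bijective (fun p => ⟨p.1.1 * p.2.1, hmul _ p.1.2.1 p.1.2.2 _ p.2.2.1⟩)
    ⟨?_, ?_⟩).symm
  · rintro ⟨⟨a, ha⟩, ⟨b, hb⟩⟩ ⟨⟨a', ha'⟩, ⟨b', hb'⟩⟩ h
    obtain ⟨rfl, rfl⟩ :=
      eq_and_eq_of_mul_eq_mul ha.1 ha'.1 ha.2 ha'.2 hb.2 hb'.2 (congrArg Subtype.val h)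
    rfl
  · rintro ⟨g, hg⟩
    obtain ⟨a, ha, b, hb, rfl, haq, hbq⟩ :=
      exists_mul_eq_isPiElement_singleton_compl (q := q) (isOfFinOrder_of_finite g)
    exact ⟨⟨⟨a, hcenter a (hzpow _ hg a ha) haq, haq⟩, ⟨b, hzpow _ hg b hb, hbq⟩⟩, rfl⟩

theorem card_center_isPiElement :
    Nat.card {a : G // a ∈ center G ∧ IsPiElement {q} a} =
      q ^ (Nat.card (center G)).factorization q := by
  let P : Sylow q (center G) := default
  have : (P : Subgroup (center G)).Normal := normal_of_isMulCommutative _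
  rw [card_mem_and_isPiElement, ← P.card_eq_multiplicity]
  exact Nat.card_congr (Equiv.subtypeEquivRight fun _ => P.mem_iff_isPiElement.symm)

theorem card_modEq_card_inter_centralizer {U : Subgroup G} (hU : IsPGroup q U) (T : Set G)
    (hT : ∀ u ∈ U, ∀ g ∈ T, u * g * u⁻¹ ∈ T) :
    Nat.card T ≡ Nat.card ↥(T ∩ centralizer (U : Set G)) [MOD q] := by
  let _ : MulAction U T :=
    { smul u g := ⟨u * g * u⁻¹, hT u u.2 g g.2⟩
      one_smul g := Subtype.ext (show 1 * (g : G) * 1⁻¹ = g by group)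
      mul_smul u v g := Subtype.ext
        (show (u * v : G) * g * ((u : G) * v)⁻¹ = u * (v * g * (v : G)⁻¹) * (u : G)⁻¹ by group) }
  have hfixed (t : T) : t ∈ MulAction.fixedPoints U T ↔ (t : G) ∈ centralizer (U : Set G) := by
    simp only [MulAction.mem_fixedPoints, mem_centralizer_iff, Subtype.ext_iff, Subtype.forall]
    exact forall₂_congr fun u _ => mul_inv_eq_iff_eq_mul
  have e := (Equiv.subtypeEquivRight hfixed).trans
    (Equiv.subtypeSubtypeEquivSubtypeInter (· ∈ T) (· ∈ centralizer (U : Set G)))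
  exact Nat.card_congr e ▸ hU.card_modEq_card_fixedPoints T

theorem not_dvd_card_isPiElement_compl_of_forall_mem_center
    (hc : ∀ x : G, IsPiElement {q} x → x ∈ center G) :
    ¬ q ∣ Nat.card {x : G // IsPiElement {q}ᶜ x} := by
  have hprod := card_eq_card_center_isPiElement_mul (S := Set.univ) (fun _ _ _ _ => trivial)
    (fun g _ => hc g) (fun _ _ _ _ _ => trivial)
  rw [card_center_isPiElement, Nat.card_univ, Set.univ_inter] at hprod
  let P : Sylow q G := default
  have hPZ : q ^ (Nat.card G).factorization q ∣ q ^ (Nat.card (center G)).factorization q := by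
    rw [← hq.out.pow_dvd_iff_dvd_ordProj Nat.card_pos.ne', ← P.card_eq_multiplicity]
    exact card_dvd_of_le fun x hx => hc x (.of_mem_isPGroup P.isPGroup' hx)
  intro hd
  refine Nat.pow_succ_factorization_not_dvd (Nat.card_pos (α := G)).ne' hq.out ?_
  calc q ^ (Nat.card G).factorization q * q
      ∣ q ^ (Nat.card (center G)).factorization q * Nat.card {x : G // IsPiElement {q}ᶜ x} :=
        mul_dvd_mul hPZ hd
    _ = Nat.card G := hprod.symm

variable (G) in
theorem not_dvd_card_isPiElement_compl : ¬ q ∣ Nat.card {x : G // IsPiElement {q}ᶜ x} := by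
  let P : Sylow q G := default
  have hmod := card_modEq_card_inter_centralizer P.isPGroup' {x | IsPiElement {q}ᶜ x}
    fun u _ g hg => hg.conj u
  have hC : ¬ q ∣ Nat.card {x : centralizer (P : Set G) // IsPiElement {q}ᶜ x} := by
    refine not_dvd_card_isPiElement_compl_of_forall_mem_center fun x hx => ?_
    have hxP : (x : G) ∈ P := P.mem_of_isPiElement_of_mem_normalizer (isPiElement_coe.mpr hx)
      (centralizer_le_normalizer _ x.2)
    exact mem_center_iff.mpr fun y => Subtype.ext (mem_centralizer_iff.mp y.2 x hxP).symm
  rw [Set.inter_comm] at hmod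
  rw [← card_mem_and_isPiElement] at hC
  exact (hmod.dvd_iff dvd_rfl).not.mpr hC

end Counting

/-- `S_{q'}(G_π)`; the index of `C_G(g)` is the size of the conjugacy class of `g`. -/
def piElementsCoprimeClassSize (G : Type*) [Group G] (π : Set ℕ) (q : ℕ) : Set G :=
  {g | IsPiElement π g ∧ ¬ q ∣ (centralizer {g}).index}

namespace piElementsCoprimeClassSize

variable {G : Type*} [Group G] {π : Set ℕ} {q : ℕ}

theorem mem_of_mem_zpowers {g x : G} (hg : g ∈ piElementsCoprimeClassSize G π q)
    (hx : x ∈ zpowers g) : x ∈ piElementsCoprimeClassSize G π q := by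
  have hle : centralizer {g} ≤ centralizer {x} := by
    rw [← centralizer_closure, ← zpowers_eq_closure]
    exact centralizer_le (Set.singleton_subset_iff.mpr hx)
  exact ⟨hg.1.of_mem_zpowers hx, fun h => hg.2 (h.trans (index_dvd_of_le hle))⟩

theorem mul_mem (hqπ : q ∈ π) {a t : G} (ha : a ∈ center G) (haq : IsPiElement {q} a)
    (ht : t ∈ piElementsCoprimeClassSize G π q) : a * t ∈ piElementsCoprimeClassSize G π q := by
  have hle : centralizer {t} ≤ centralizer {a * t} := fun x hx =>
    mem_centralizer_singleton_iff.mpr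
      (((Set.mem_center_iff.mp ha).comm x).symm.mul_right (mem_centralizer_singleton_iff.mp hx))
  exact ⟨(haq.mono (Set.singleton_subset_iff.mpr hqπ)).mul ht.1 ((Set.mem_center_iff.mp ha).comm t),
    fun h => ht.2 (h.trans (index_dvd_of_le hle))⟩

theorem conj_mem {g : G} (hg : g ∈ piElementsCoprimeClassSize G π q) (u : G) :
    u * g * u⁻¹ ∈ piElementsCoprimeClassSize G π q :=
  ⟨hg.1.conj u, fun h => hg.2 (h.trans (index_centralizer_conj_dvd u g))⟩

variable [Finite G] [Fact q.Prime]

theorem inter_centralizer_eq (Q : Sylow q G) {K : Subgroup (centralizer (Q : Set G))} [K.Normal]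
    (hK : K.IsHall π) :
    piElementsCoprimeClassSize G π q ∩ {t | IsPiElement {q}ᶜ t} ∩ centralizer (Q : Set G) =
      {g | g ∈ K.map (centralizer (Q : Set G)).subtype ∧ IsPiElement {q}ᶜ g} := by
  ext g
  constructor
  · rintro ⟨⟨⟨hπ, -⟩, hq'⟩, hgC⟩
    exact ⟨⟨⟨g, hgC⟩, hK.isPiElement_iff_mem.mp (isPiElement_coe.mp hπ), rfl⟩, hq'⟩
  · rintro ⟨⟨⟨g, hgC⟩, hgK, rfl⟩, hq'⟩
    have hQ : (Q : Subgroup G) ≤ centralizer {g} := fun y hy =>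
      mem_centralizer_singleton_iff.mpr (mem_centralizer_iff.mp hgC y hy)
    exact ⟨⟨⟨isPiElement_coe.mpr (hK.isPiElement_iff_mem.mpr hgK), Q.not_dvd_index_of_le hQ⟩,
      hq'⟩, hgC⟩

theorem not_dvd_card_inter_compl (Q : Sylow q G) {K : Subgroup (centralizer (Q : Set G))}
    [K.Normal] (hK : K.IsHall π) :
    ¬ q ∣ Nat.card ↥(piElementsCoprimeClassSize G π q ∩ {t | IsPiElement {q}ᶜ t}) := by
  have hmod : Nat.card ↥(piElementsCoprimeClassSize G π q ∩ {t | IsPiElement {q}ᶜ t}) ≡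
      Nat.card ↥(piElementsCoprimeClassSize G π q ∩ {t | IsPiElement {q}ᶜ t} ∩
        centralizer (Q : Set G)) [MOD q] :=
    card_modEq_card_inter_centralizer Q.isPGroup' _ fun u _ g hg => ⟨conj_mem hg.1 u, hg.2.conj u⟩
  rw [inter_centralizer_eq Q hK] at hmod
  have hK' := not_dvd_card_isPiElement_compl (q := q) (K.map (centralizer (Q : Set G)).subtype)
  rw [← card_mem_and_isPiElement] at hK'
  exact (hmod.dvd_iff dvd_rfl).not.mpr hK'

end piElementsCoprimeClassSize

/-- If `Z(Q) ≤ Z(G)` and `C_G(Q)` has a normal Hall π-subgroup, then the q-part of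
`|S_{q'}(G_π)|` equals `|Z(G)|_q`. -/
theorem stmt18 {G : Type*} [Group G] [Finite G] (π : Set ℕ) (q : ℕ)
    [Fact q.Prime] (hqπ : q ∈ π) (Q : Sylow q G)
    (hZQ : ∀ x ∈ (Q : Subgroup G), (∀ y ∈ (Q : Subgroup G), x * y = y * x) →
      x ∈ Subgroup.center G)
    (hHall : ∃ K : Subgroup (Subgroup.centralizer (Q : Set G)), K.Normal ∧
      (∀ p : ℕ, p.Prime → p ∣ Nat.card K → p ∈ π) ∧
      (∀ p : ℕ, p.Prime → p ∣ K.index → p ∉ π)) :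
    (Nat.card {g : G // IsPiElement π g ∧
        ¬ q ∣ (Subgroup.centralizer {g}).index}).factorization q
      = (Nat.card (Subgroup.center G)).factorization q := by
  obtain ⟨K, hKn, hK⟩ := hHall
  have hprod := card_eq_card_center_isPiElement_mul (S := piElementsCoprimeClassSize G π q)
    (fun _ hg _ hx => piElementsCoprimeClassSize.mem_of_mem_zpowers hg hx)
    (fun _ hg hgq => mem_center_of_isPiElement_of_not_dvd_index Q hZQ hgq hg.2)
    (fun _ ha haq _ ht => piElementsCoprimeClassSize.mul_mem hqπ ha haq ht)
  have hT := piElementsCoprimeClassSize.not_dvd_card_inter_compl Q (K := K) hK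
  have hT0 : Nat.card ↥(piElementsCoprimeClassSize G π q ∩ {t | IsPiElement {q}ᶜ t}) ≠ 0 :=
    fun h0 => hT (h0 ▸ dvd_zero q)
  change (Nat.card (piElementsCoprimeClassSize G π q)).factorization q = _
  rw [hprod, card_center_isPiElement, Nat.factorization_mul (pow_ne_zero _ NeZero.out) hT0,
    Finsupp.add_apply, Nat.factorization_pow_self Fact.out,
    Nat.factorization_eq_zero_of_not_dvd hT, add_zero]
end

section
/- Let G be a finite group, π a set of primes, q ∈ π, Q a Sylow q-subgroup, and Z = Z(G) ∩ Q. Consider the conjugation action of Q/Z on the set A of cosets of Z contained in S_{q'}(G_π). A coset gZ ∈ A is fixed by Q/Z if and only if g lies in C_G(Q); consequently |S_{q'}(G_π)|/|Z| is congruent modulo q to the number of π-elements of C_G(Q)/Z. -/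
/-- Conjugation action of a subgroup `Q` on an invariant set of cosets in `G ⧸ Z`. -/
def conjQuotAction {G : Type*} [Group G] {Z : Subgroup G} [Z.Normal] (Q : Subgroup G)
    (A : Set (G ⧸ Z))
    (hA : ∀ (u : Q) (x : G ⧸ Z), x ∈ A →
      ((u : G) : G ⧸ Z) * x * (((u : G) : G ⧸ Z))⁻¹ ∈ A) :
    MulAction Q A where
  smul u x := ⟨((u : G) : G ⧸ Z) * x * (((u : G) : G ⧸ Z))⁻¹, hA u x x.2⟩
  one_smul x := by
    apply Subtype.ext
    show (((1 : Q) : G) : G ⧸ Z) * x * ((((1 : Q) : G) : G ⧸ Z))⁻¹ = x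
    simp
  mul_smul u v x := by
    apply Subtype.ext
    show ((((u * v : Q) : G)) : G ⧸ Z) * x * (((((u * v : Q) : G)) : G ⧸ Z))⁻¹ =
      ((u : G) : G ⧸ Z) * (((v : G) : G ⧸ Z) * x * (((v : G) : G ⧸ Z))⁻¹) *
        (((u : G) : G ⧸ Z))⁻¹
    simp only [Subgroup.coe_mul, QuotientGroup.mk_mul]
    group

/-- For `Z = Z(G) ⊓ Q`: a coset `gZ ⊆ S_{q'}(G_π)` is fixed under conjugation by `Q`
iff `g ∈ C_G(Q)`; consequently `|S_{q'}(G_π)|/|Z|` is congruent mod `q` to the number of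
π-elements of `C_G(Q)/Z`. -/
theorem stmt19 {G : Type*} [Group G] [Finite G] (π : Set ℕ) (q : ℕ)
    [Fact q.Prime] (hqπ : q ∈ π) (Q : Sylow q G)
    (Z : Subgroup G) [Z.Normal] (hZ : Z = Subgroup.center G ⊓ (Q : Subgroup G)) :
    (∀ g : G, IsPiElement π g → ¬ q ∣ (Subgroup.centralizer {g}).index →
      ((∀ u ∈ (Q : Subgroup G), ∃ z ∈ Z, u⁻¹ * g * u = g * z) ↔
        g ∈ Subgroup.centralizer (Q : Set G))) ∧
    Nat.card {g : G // IsPiElement π g ∧ ¬ q ∣ (Subgroup.centralizer {g}).index}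
        / Nat.card Z
      ≡ Nat.card {x : G ⧸ Z // x ∈ Subgroup.map (QuotientGroup.mk' Z)
          (Subgroup.centralizer (Q : Set G)) ∧ IsPiElement π x} [MOD q] := by
  have hq : q.Prime := Fact.out
  have hZcent : Z ≤ Subgroup.center G := hZ ▸ inf_le_left
  have hZQ : Z ≤ (Q : Subgroup G) := hZ ▸ inf_le_right
  have hcentral : ∀ z ∈ Z, ∀ w : G, z * w = w * z := fun z hz w =>
    (Subgroup.mem_center_iff.mp (hZcent hz) w).symm
  -- card Z is a q-power
  obtain ⟨k, hk⟩ : ∃ k, Nat.card Z = q ^ k := IsPGroup.iff_card.mp (Q.isPGroup'.to_le hZQ)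
  -- Part 1
  have hpart1 : ∀ g : G, IsPiElement π g → ¬ q ∣ (Subgroup.centralizer {g}).index →
      ((∀ u ∈ (Q : Subgroup G), ∃ z ∈ Z, u⁻¹ * g * u = g * z) ↔
        g ∈ Subgroup.centralizer (Q : Set G)) := by
    intro g _ hqdvd
    constructor
    · intro hcos
      set C := Subgroup.centralizer ({g} : Set G) with hC
      let H : Subgroup G :=
        { carrier := {u : G | g⁻¹ * u⁻¹ * g * u ∈ Z}
          one_mem' := by simpa using Z.one_mem
          mul_mem' := by
            intro u v hu hv
            have hcomm := hcentral _ hu v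
            show g⁻¹ * (u * v)⁻¹ * g * (u * v) ∈ Z
            have key : g⁻¹ * (u * v)⁻¹ * g * (u * v) =
                (g⁻¹ * v⁻¹ * g * v) * (g⁻¹ * u⁻¹ * g * u) := by
              rw [show g⁻¹ * (u * v)⁻¹ * g * (u * v) =
                g⁻¹ * v⁻¹ * g * ((g⁻¹ * u⁻¹ * g * u) * v) by group, hcomm]
              group
            rw [key]; exact Z.mul_mem hv hu
          inv_mem' := by
            intro u hu
            show g⁻¹ * u⁻¹⁻¹ * g * u⁻¹ ∈ Z
            have hcomm := hcentral _ (Z.inv_mem hu) u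
            rw [show g⁻¹ * u⁻¹⁻¹ * g * u⁻¹ = u * (g⁻¹ * u⁻¹ * g * u)⁻¹ * u⁻¹ by group,
              ← hcomm]
            simpa [mul_assoc] using Z.inv_mem hu }
      have hmemH : ∀ u : G, u ∈ H ↔ g⁻¹ * u⁻¹ * g * u ∈ Z := fun u => Iff.rfl
      have hCH : C ≤ H := by
        intro u hu
        have hu' : u * g = g * u := Subgroup.mem_centralizer_singleton_iff.mp hu
        rw [hmemH, show g⁻¹ * u⁻¹ * g * u = (g⁻¹ * u⁻¹) * (g * u) by group, ← hu']
        simpa [mul_assoc] using Z.one_mem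
      -- the homomorphism H →* Z
      let φ : H →* Z :=
        { toFun := fun u => ⟨g⁻¹ * (u : G)⁻¹ * g * u, u.2⟩
          map_one' := by ext; simp
          map_mul' := by
            intro u v
            ext
            show g⁻¹ * ((u : G) * v)⁻¹ * g * ((u : G) * v) =
              (g⁻¹ * (u : G)⁻¹ * g * u) * (g⁻¹ * (v : G)⁻¹ * g * v)
            have hcomm := hcentral _ u.2 (v : G)
            rw [show g⁻¹ * ((u : G) * v)⁻¹ * g * ((u : G) * v) =
              g⁻¹ * (v : G)⁻¹ * g * ((g⁻¹ * (u : G)⁻¹ * g * u) * v) by group, hcomm]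
            rw [show g⁻¹ * (v:G)⁻¹ * g * ((v:G) * (g⁻¹ * (u:G)⁻¹ * g * u)) =
              (g⁻¹ * (v:G)⁻¹ * g * v) * (g⁻¹ * (u:G)⁻¹ * g * u) by group]
            exact (hcentral _ v.2 _).symm ▸ (hcentral _ v.2 (g⁻¹ * (u:G)⁻¹ * g * u)) }
      have hker : C.subgroupOf H = φ.ker := by
        ext u
        rw [Subgroup.mem_subgroupOf, MonoidHom.mem_ker, Subtype.ext_iff]
        show (u : G) ∈ C ↔ g⁻¹ * (u : G)⁻¹ * g * u = 1
        rw [hC, Subgroup.mem_centralizer_singleton_iff]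
        constructor
        · intro h
          rw [show g⁻¹ * (u:G)⁻¹ * g * u = (g⁻¹ * (u:G)⁻¹) * (g * u) by group, ← h]
          group
        · intro h
          have h' : (u:G)⁻¹ * (g * u) = g := by
            rw [show (u:G)⁻¹ * (g * u) = g * (g⁻¹ * (u:G)⁻¹ * g * u) by group, h, mul_one]
          calc (u:G) * g = (u:G) * ((u:G)⁻¹ * (g * (u:G))) := by rw [h']
            _ = g * u := by group
      have hrel1 : C.relIndex H ∣ Nat.card Z := by
        have : C.relIndex H = Nat.card (H ⧸ φ.ker) := by
          rw [Subgroup.relIndex, hker, Subgroup.index_eq_card]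
        rw [this, Nat.card_congr (QuotientGroup.quotientKerEquivRange φ).toEquiv]
        exact Subgroup.card_subgroup_dvd_card _
      have hrel2 : C.relIndex H ∣ C.index := ⟨H.index, (Subgroup.relIndex_mul_index hCH).symm⟩
      have hrel : C.relIndex H = 1 := by
        rw [hk] at hrel1
        obtain ⟨j, -, hj⟩ := (Nat.dvd_prime_pow hq).mp hrel1
        cases j with
        | zero => simpa using hj
        | succ n =>
          have : q ∣ C.relIndex H := hj ▸ dvd_pow_self q n.succ_ne_zero
          exact absurd (this.trans hrel2) hqdvd
      have hHC : H ≤ C := Subgroup.relIndex_eq_one.mp hrel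
      rw [Subgroup.mem_centralizer_iff]
      intro u hu
      obtain ⟨z, hz, heq⟩ := hcos u hu
      have huH : u ∈ H := by
        rw [hmemH, show g⁻¹ * u⁻¹ * g * u = g⁻¹ * (u⁻¹ * g * u) by group, heq,
          show g⁻¹ * (g * z) = z by group]
        exact hz
      exact Subgroup.mem_centralizer_singleton_iff.mp (hHC huH)
    · intro hg u hu
      refine ⟨1, Z.one_mem, ?_⟩
      have h := Subgroup.mem_centralizer_iff.mp hg u hu
      rw [mul_one, show u⁻¹ * g * u = u⁻¹ * (g * u) by group, ← h]
      group
  refine ⟨hpart1, ?_⟩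
  classical
  set S : Set G := {g : G | IsPiElement π g ∧ ¬ q ∣ (Subgroup.centralizer {g}).index} with hS
  set A : Set (G ⧸ Z) := QuotientGroup.mk '' S with hAdef
  -- S is closed under right multiplication by Z
  have hSz : ∀ g ∈ S, ∀ z ∈ Z, g * z ∈ S := by
    intro g hg z hz
    have hcom : Commute g z := (hcentral z hz g).symm
    constructor
    · intro p pp hp
      have h1 : orderOf (g * z) ∣ (orderOf g).lcm (orderOf z) := hcom.orderOf_mul_dvd_lcm
      have h2 : p ∣ (orderOf g) * (orderOf z) := dvd_trans (hp.trans h1) (Nat.lcm_dvd_mul _ _)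
      rcases (Nat.Prime.dvd_mul pp).mp h2 with h | h
      · exact hg.1 p pp h
      · have hzq : orderOf z ∣ q ^ k := by
          rw [← hk]
          exact Subgroup.orderOf_dvd_natCard Z hz
        have := pp.dvd_of_dvd_pow (h.trans hzq)
        rwa [(Nat.prime_dvd_prime_iff_eq pp hq).mp this]
    · have hcz : Subgroup.centralizer {g * z} = Subgroup.centralizer {g} := by
        ext x
        simp only [Subgroup.mem_centralizer_singleton_iff]
        rw [show x * (g * z) = (x * g) * z by group,
          show (g * z) * x = g * (z * x) by group, hcentral z hz x,
          show g * (x * z) = (g * x) * z by group, mul_left_inj]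
      rw [hcz]
      exact hg.2
  -- S is invariant under conjugation
  have hSconj : ∀ g ∈ S, ∀ u : G, u * g * u⁻¹ ∈ S := by
    intro g hg u
    have horder : orderOf (u * g * u⁻¹) = orderOf g := by
      have h := orderOf_injective (MulAut.conj u).toMonoidHom (MulEquiv.injective _) g
      simpa [MulAut.conj_apply] using h
    constructor
    · intro p pp hp
      exact hg.1 p pp (horder ▸ hp)
    · have hcent : Subgroup.centralizer {u * g * u⁻¹} =
          (Subgroup.centralizer {g}).map (MulAut.conj u).toMonoidHom := by
        ext x
        rw [Subgroup.mem_map_equiv]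
        simp only [Subgroup.mem_centralizer_singleton_iff, MulAut.conj_symm_apply]
        have hiff := Commute.conj_iff (a := x) (b := u * g * u⁻¹) u⁻¹
        rw [show u⁻¹ * x * u⁻¹⁻¹ = u⁻¹ * x * u by group,
          show u⁻¹ * (u * g * u⁻¹) * u⁻¹⁻¹ = g by group] at hiff
        exact hiff.symm
      have hker0 : ((MulAut.conj u).toMonoidHom : G →* G).ker = ⊥ :=
        (MonoidHom.ker_eq_bot_iff _).mpr (MulEquiv.injective _)
      have hker2 : ((MulAut.conj u).toMonoidHom : G →* G).ker ≤ Subgroup.centralizer {g} :=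
        hker0 ▸ bot_le
      rw [hcent, Subgroup.index_map_eq (H := Subgroup.centralizer {g})
        (MulEquiv.surjective (MulAut.conj u)) hker2]
      exact hg.2
  -- A is invariant under conjugation by Q
  have hAconj : ∀ (u : (Q : Subgroup G)) (x : G ⧸ Z), x ∈ A →
      (((u : G) : G ⧸ Z)) * x * ((((u : G) : G ⧸ Z)))⁻¹ ∈ A := by
    rintro u x ⟨g, hg, rfl⟩
    exact ⟨(u : G) * g * (u : G)⁻¹, hSconj g hg u, by
      simp only [QuotientGroup.mk_mul, QuotientGroup.mk_inv]⟩
  letI act := conjQuotAction (G := G) (Z := Z) (Q : Subgroup G) A hAconj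
  have hmod := Q.isPGroup'.card_modEq_card_fixedPoints (α := A)
  -- preimage of A is S
  have hpre : QuotientGroup.mk ⁻¹' A = S := by
    ext g
    constructor
    · rintro ⟨g', hg', hgg'⟩
      have hz : g'⁻¹ * g ∈ Z := QuotientGroup.eq.mp hgg'
      have := hSz g' hg' _ hz
      simpa [mul_inv_cancel_left] using this
    · intro hgS
      exact ⟨g, hgS, rfl⟩
  -- |S| = |A| * |Z|
  have hcardS : Nat.card S = Nat.card A * Nat.card Z := by
    rw [← hpre]
    have e : (QuotientGroup.mk ⁻¹' A : Set G) ≃ A × Z :=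
      { toFun := fun g => (⟨QuotientGroup.mk g.1, g.2⟩,
          ⟨((QuotientGroup.mk g.1 : G ⧸ Z)).out⁻¹ * g.1,
            QuotientGroup.eq.mp (QuotientGroup.out_eq' (QuotientGroup.mk g.1))⟩)
        invFun := fun p => ⟨((p.1 : G ⧸ Z)).out * p.2.1, by
          show QuotientGroup.mk _ ∈ A
          rw [QuotientGroup.mk_mul, QuotientGroup.out_eq',
            (QuotientGroup.eq_one_iff _).mpr p.2.2, mul_one]
          exact p.1.2⟩
        left_inv := fun g => Subtype.ext (mul_inv_cancel_left _ _)
        right_inv := fun p => by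
          have h1 : QuotientGroup.mk (((p.1 : G ⧸ Z)).out * p.2.1) = (p.1 : G ⧸ Z) := by
            rw [QuotientGroup.mk_mul, QuotientGroup.out_eq',
              (QuotientGroup.eq_one_iff _).mpr p.2.2, mul_one]
          exact Prod.ext (Subtype.ext h1)
            (Subtype.ext (by simp only [h1]; exact inv_mul_cancel_left _ _)) }
    rw [Nat.card_congr e, Nat.card_prod]
  -- fixed cosets contain an element of C_G(Q)
  have hfwd : ∀ g ∈ S, (∀ u : (Q : Subgroup G),
      QuotientGroup.mk (s := Z) ((u : G) * g * (u : G)⁻¹) = QuotientGroup.mk g) →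
      g ∈ Subgroup.centralizer (Q : Set G) := by
    intro g hgS hfix
    refine (hpart1 g hgS.1 hgS.2).mp ?_
    intro u hu
    have h := hfix ⟨u⁻¹, Subgroup.inv_mem _ hu⟩
    simp only [inv_inv] at h
    exact ⟨g⁻¹ * (u⁻¹ * g * u), QuotientGroup.eq.mp h.symm, by group⟩
  -- elements of C_G(Q) whose coset is a π-element lie in S
  have hbwd : ∀ x : G ⧸ Z,
      x ∈ Subgroup.map (QuotientGroup.mk' Z) (Subgroup.centralizer (Q : Set G)) →
      IsPiElement π x → ∃ g, g ∈ S ∧ QuotientGroup.mk g = x ∧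
        g ∈ Subgroup.centralizer (Q : Set G) := by
    intro x hx hpi
    obtain ⟨g, hgC, rfl⟩ := Subgroup.mem_map.mp hx
    refine ⟨g, ⟨?_, ?_⟩, rfl, hgC⟩
    · intro p pp hp
      set n := orderOf ((QuotientGroup.mk' Z) g) with hn
      have h1 : g ^ n ∈ Z := by
        rw [← QuotientGroup.eq_one_iff]
        show QuotientGroup.mk' Z (g ^ n) = 1
        rw [map_pow, pow_orderOf_eq_one]
      have h2 : orderOf (g ^ n) ∣ q ^ k := by
        rw [← hk]
        exact Subgroup.orderOf_dvd_natCard Z h1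
      have h3 : orderOf g ∣ n * orderOf (g ^ n) :=
        orderOf_dvd_of_pow_eq_one (by rw [pow_mul, pow_orderOf_eq_one])
      rcases pp.dvd_mul.mp (hp.trans h3) with h | h
      · exact hpi p pp h
      · rwa [(Nat.prime_dvd_prime_iff_eq pp hq).mp (pp.dvd_of_dvd_pow (h.trans h2))]
    · have hQC : (Q : Subgroup G) ≤ Subgroup.centralizer {g} := fun u hu =>
        Subgroup.mem_centralizer_singleton_iff.mpr
          (Subgroup.mem_centralizer_iff.mp hgC u hu)
      exact fun hdvd => Sylow.not_dvd_index Q (hdvd.trans (Subgroup.index_dvd_of_le hQC))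
  -- characterization of fixed points
  have hiff : ∀ x : G ⧸ Z, (x ∈ A ∧ ∀ u : (Q : Subgroup G),
      (((u : G) : G ⧸ Z)) * x * ((((u : G) : G ⧸ Z)))⁻¹ = x) ↔
      (x ∈ Subgroup.map (QuotientGroup.mk' Z) (Subgroup.centralizer (Q : Set G)) ∧
        IsPiElement π x) := by
    intro x
    constructor
    · rintro ⟨⟨g, hgS, rfl⟩, hfix⟩
      have hgC : g ∈ Subgroup.centralizer (Q : Set G) := by
        refine hfwd g hgS (fun u => ?_)
        simp only [QuotientGroup.mk_mul, QuotientGroup.mk_inv]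
        exact hfix u
      refine ⟨Subgroup.mem_map.mpr ⟨g, hgC, rfl⟩, ?_⟩
      intro p pp hp
      exact hgS.1 p pp (hp.trans (orderOf_map_dvd (QuotientGroup.mk' Z) g))
    · rintro ⟨hmap, hpi⟩
      obtain ⟨g, hgS, hmk, hgC⟩ := hbwd x hmap hpi
      subst hmk
      refine ⟨⟨g, hgS, rfl⟩, fun u => ?_⟩
      have hueq : (u : G) * g * (u : G)⁻¹ = g := by
        have h := Subgroup.mem_centralizer_iff.mp hgC (u : G) u.2
        rw [h]; group
      rw [← QuotientGroup.mk_inv, ← QuotientGroup.mk_mul, ← QuotientGroup.mk_mul, hueq]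
  -- the number of fixed points
  have hcardfix : Nat.card (MulAction.fixedPoints (Q : Subgroup G) A) =
      Nat.card {x : G ⧸ Z // x ∈ Subgroup.map (QuotientGroup.mk' Z)
        (Subgroup.centralizer (Q : Set G)) ∧ IsPiElement π x} := by
    refine Nat.card_congr
      { toFun := fun a => ⟨a.1.1, (hiff _).mp ⟨a.1.2, fun u => Subtype.ext_iff.mp (a.2 u)⟩⟩
        invFun := fun t => ⟨⟨t.1, ((hiff _).mpr t.2).1⟩,
          fun u => Subtype.ext (((hiff _).mpr t.2).2 u)⟩
        left_inv := fun a => Subtype.ext (Subtype.ext rfl)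
        right_inv := fun t => rfl }
  -- conclusion
  have hZpos : 0 < Nat.card Z := Nat.card_pos
  rw [show Nat.card {g : G // IsPiElement π g ∧ ¬ q ∣ (Subgroup.centralizer {g}).index} =
    Nat.card A * Nat.card Z from hcardS, Nat.mul_div_cancel _ hZpos]
  rw [hcardfix] at hmod
  exact hmod
end
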